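/- arXiv:1004.1740 — 9 statements merged into one kernel-verified Lean document; each statement's English description precedes it below -/
import Mathlib

section
/- For every positive integer n, M(2n) ≥ 2·M(n)^2. -/
/-- A finite sequence (list) of naturals contains a 3-term arithmetic progression
as a subsequence: there are indices `i < j < k` with `a i + a k = 2 * a j`,
equivalently some sublist `[x, y, z]` with `x + z = 2 * y`. -/
def Has3AP (l : List ℕ) : Prop :=
  ∃ x y z : ℕ, [x, y, z].Sublist l ∧ x + z = 2 * y

/-- `M n` is the number of 3AP-free permutations of `{1, 2, ..., n}`. -/
noncomputable def M (n : ℕ) : ℕ :=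
  Nat.card {l : List ℕ // l.Perm (List.range' 1 n) ∧ ¬ Has3AP l}

/-!
Put a 3AP-free permutation `a` of `{1, …, n}` on the even numbers (`p ↦ 2p`) and another one `b`
on the odd numbers (`p ↦ 2p - 1`); both maps are affine, so the images are 3AP-free. Concatenating
them, in either order, gives a permutation of `{1, …, 2n}` with no 3AP: the two outer terms of a
3AP have equal parity, so they lie in the same block, and then so does the middle term. For
`n > 0` the first entry determines which block comes first, so the `2 M(n)²` lists are distinct.
-/

open List Function

abbrev APFreePerm (n : ℕ) : Type :=
  {l : List ℕ // l.Perm (range' 1 n) ∧ ¬ Has3AP l}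

lemma Has3AP.of_map {f : ℕ → ℕ} {l : List ℕ}
    (hf : ∀ x ∈ l, ∀ y ∈ l, ∀ z ∈ l, f x + f z = 2 * f y → x + z = 2 * y)
    (h : Has3AP (l.map f)) : Has3AP l := by
  obtain ⟨x, y, z, hs, hxyz⟩ := h
  obtain ⟨l', hl', hmap⟩ := sublist_map_iff.1 hs
  rcases l' with _ | ⟨p, _ | ⟨q, _ | ⟨r, _ | ⟨_, _⟩⟩⟩⟩ <;>
    simp only [map_cons, map_nil, reduceCtorEq, cons.injEq, and_false] at hmap
  obtain ⟨rfl, rfl, rfl, -⟩ := hmap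
  have hp : p ∈ l := hl'.subset (by simp)
  have hq : q ∈ l := hl'.subset (by simp)
  have hr : r ∈ l := hl'.subset (by simp)
  exact ⟨p, q, r, hl', hf p hp q hq r hr hxyz⟩

/-- The outer terms of a 3AP have an even sum, so they cannot be split across the two parts. -/
lemma not_has3AP_append {l₁ l₂ : List ℕ} (h₁ : ¬ Has3AP l₁) (h₂ : ¬ Has3AP l₂)
    (hodd : ∀ x ∈ l₁, ∀ z ∈ l₂, Odd (x + z)) : ¬ Has3AP (l₁ ++ l₂) := by
  rintro ⟨x, y, z, hs, hxyz⟩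
  obtain ⟨m₁, m₂, hm, hm₁, hm₂⟩ := sublist_append_iff.1 hs
  have split {x z : ℕ} (hx : x ∈ l₁) (hz : z ∈ l₂) : x + z ≠ 2 * y := fun h => by
    obtain ⟨k, hk⟩ := hodd x hx z hz
    omega
  rcases m₁ with _ | ⟨u, _ | ⟨v, _ | ⟨w, _ | ⟨_, _⟩⟩⟩⟩ <;>
    simp only [nil_append, cons_append, cons.injEq, reduceCtorEq, and_false] at hm
  · exact h₂ ⟨x, y, z, hm ▸ hm₂, hxyz⟩
  · obtain ⟨rfl, rfl⟩ := hm
    exact split (hm₁.subset (by simp)) (hm₂.subset (by simp)) hxyz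
  · obtain ⟨rfl, rfl, rfl⟩ := hm
    exact split (hm₁.subset (by simp)) (hm₂.subset (by simp)) hxyz
  · obtain ⟨rfl, rfl, rfl, rfl⟩ := hm
    exact h₁ ⟨x, y, z, by simpa using hm₁, hxyz⟩

lemma two_mul_sub_one_injective : Injective (fun p : ℕ => 2 * p - 1) := fun p q h => by
  simp only at h
  omega

lemma map_two_mul_append_map_two_mul_sub_one_perm (n : ℕ) :
    ((range' 1 n).map (2 * ·) ++ (range' 1 n).map (2 * · - 1)).Perm (range' 1 (2 * n)) := by
  have hdisj : ∀ x ∈ (range' 1 n).map (2 * ·), ∀ y ∈ (range' 1 n).map (2 * · - 1),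
      x ≠ y := by
    simp only [mem_map, mem_range'_1]
    rintro _ ⟨p, -, rfl⟩ _ ⟨q, ⟨hq, -⟩, rfl⟩
    omega
  have hnodup := nodup_append.2 ⟨(nodup_range' ..).map (mul_right_injective₀ two_ne_zero),
    (nodup_range' ..).map two_mul_sub_one_injective, hdisj⟩
  rw [perm_ext_iff_of_nodup hnodup (nodup_range' ..)]
  intro x
  simp only [mem_append, mem_map, mem_range'_1]
  constructor
  · rintro (⟨p, hp, rfl⟩ | ⟨p, hp, rfl⟩) <;> omega
  · intro hx
    rcases Nat.even_or_odd x with ⟨p, hp⟩ | ⟨p, hp⟩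
    · exact .inl ⟨p, by omega, by omega⟩
    · exact .inr ⟨p + 1, by omega, by omega⟩

lemma map_append_map_inj {α β : Type*} {f g : α → β} (hf : Injective f) (hg : Injective g)
    {a a' b b' : List α} (hlen : a.length = a'.length)
    (h : a.map f ++ b.map g = a'.map f ++ b'.map g) : a = a' ∧ b = b' := by
  obtain ⟨ha, hb⟩ := append_inj h (by simpa using hlen)
  exact ⟨map_injective_iff.2 hf ha, map_injective_iff.2 hg hb⟩

namespace APFreePerm

instance (n : ℕ) : Finite (APFreePerm n) :=
  Set.Finite.to_subtype <| (range' 1 n).permutations.finite_toSet.subset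
    (t := {l : List ℕ | l.Perm (range' 1 n) ∧ ¬ Has3AP l}) fun _ hl => mem_permutations.2 hl.1

variable {n : ℕ}

lemma length_eq (a : APFreePerm n) : a.1.length = n := by
  simpa using a.2.1.length_eq

lemma one_le (a : APFreePerm n) {x : ℕ} (hx : x ∈ a.1) : 1 ≤ x :=
  (mem_range'_1.1 (a.2.1.mem_iff.1 hx)).1

lemma not_has3AP_map_two_mul (a : APFreePerm n) : ¬ Has3AP (a.1.map (2 * ·)) :=
  fun h => a.2.2 (h.of_map fun _ _ _ _ _ _ h => by omega)

lemma not_has3AP_map_two_mul_sub_one (a : APFreePerm n) : ¬ Has3AP (a.1.map (2 * · - 1)) :=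
  fun h => a.2.2 (h.of_map fun _ hx _ hy _ hz h => by
    have := a.one_le hx; have := a.one_le hy; have := a.one_le hz; omega)

lemma odd_add (a b : APFreePerm n) :
    ∀ x ∈ a.1.map (2 * ·), ∀ z ∈ b.1.map (2 * · - 1), Odd (x + z) := by
  simp only [mem_map]
  rintro _ ⟨p, -, rfl⟩ _ ⟨q, hq, rfl⟩
  have := b.one_le hq
  exact ⟨p + q - 1, by omega⟩

def evenOdd (a b : APFreePerm n) : APFreePerm (2 * n) :=
  ⟨a.1.map (2 * ·) ++ b.1.map (2 * · - 1),
    ((a.2.1.map _).append (b.2.1.map _)).trans (map_two_mul_append_map_two_mul_sub_one_perm n),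
    not_has3AP_append a.not_has3AP_map_two_mul b.not_has3AP_map_two_mul_sub_one (odd_add a b)⟩

def oddEven (a b : APFreePerm n) : APFreePerm (2 * n) :=
  ⟨a.1.map (2 * · - 1) ++ b.1.map (2 * ·),
    (((a.2.1.map _).append (b.2.1.map _)).trans perm_append_comm).trans
      (map_two_mul_append_map_two_mul_sub_one_perm n),
    not_has3AP_append a.not_has3AP_map_two_mul_sub_one b.not_has3AP_map_two_mul
      fun x hx z hz => add_comm z x ▸ odd_add b a z hz x hx⟩

lemma evenOdd_injective : Injective (uncurry (evenOdd (n := n))) := by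
  rintro ⟨a, b⟩ ⟨a', b'⟩ h
  obtain ⟨ha, hb⟩ := map_append_map_inj (mul_right_injective₀ two_ne_zero)
    two_mul_sub_one_injective (by rw [a.length_eq, a'.length_eq])
    (congrArg Subtype.val h)
  exact Prod.ext (Subtype.ext ha) (Subtype.ext hb)

lemma oddEven_injective : Injective (uncurry (oddEven (n := n))) := by
  rintro ⟨a, b⟩ ⟨a', b'⟩ h
  obtain ⟨ha, hb⟩ := map_append_map_inj two_mul_sub_one_injective
    (mul_right_injective₀ two_ne_zero) (by rw [a.length_eq, a'.length_eq])
    (congrArg Subtype.val h)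
  exact Prod.ext (Subtype.ext ha) (Subtype.ext hb)

lemma evenOdd_ne_oddEven (hn : 0 < n) (a b a' b' : APFreePerm n) :
    evenOdd a b ≠ oddEven a' b' := by
  intro h
  obtain ⟨u, t, hu⟩ := exists_cons_of_length_pos (a.length_eq ▸ hn)
  obtain ⟨v, t', hv⟩ := exists_cons_of_length_pos (a'.length_eq ▸ hn)
  have hv₁ := a'.one_le (hv ▸ mem_cons_self)
  have h := congrArg Subtype.val h
  simp only [evenOdd, oddEven, hu, hv, map_cons, cons_append, cons.injEq] at h
  omega

end APFreePerm

/-- For every positive integer `n`, `M (2n) ≥ 2 * M n ^ 2`. -/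
theorem M_two_mul (n : ℕ) (hn : 0 < n) : 2 * (M n) ^ 2 ≤ M (2 * n) := by
  have hinj : Injective (Sum.elim (uncurry APFreePerm.evenOdd) (uncurry APFreePerm.oddEven) :
      (APFreePerm n × APFreePerm n) ⊕ (APFreePerm n × APFreePerm n) → APFreePerm (2 * n)) :=
    APFreePerm.evenOdd_injective.sumElim APFreePerm.oddEven_injective
      fun _ _ => APFreePerm.evenOdd_ne_oddEven hn _ _ _ _
  calc 2 * M n ^ 2
      = Nat.card ((APFreePerm n × APFreePerm n) ⊕ (APFreePerm n × APFreePerm n)) := by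
        rw [Nat.card_sum, Nat.card_prod, M]; ring
    _ ≤ M (2 * n) := Nat.card_le_card_of_injective _ hinj
end

section
/- Let n be a positive integer, let σ₁ be a 3AP-free permutation of the even numbers {2, 4, ..., 2n}, and let σ₂ be a 3AP-free permutation of the odd numbers {1, 3, ..., 2n−1}. Then the concatenated sequence σ₁σ₂ is a 3AP-free permutation of {1, 2, ..., 2n} (and likewise σ₂σ₁ is 3AP-free). -/
lemma perm_aux (n : ℕ) :
    (((List.range n).map (fun i => 2 * i + 2)) ++ ((List.range n).map (fun i => 2 * i + 1))).Perm
      (List.range' 1 (2 * n)) := by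
  induction n with
  | zero => simp
  | succ n ih =>
    have h2 : 2 * (n + 1) = (2 * n + 1) + 1 := by ring
    rw [← Multiset.coe_eq_coe] at ih ⊢
    rw [h2, List.range'_concat, List.range'_concat, List.range_succ]
    simp only [List.map_append, List.map_singleton, ← Multiset.coe_add, one_mul] at ih ⊢
    have e1 : (1:ℕ) + 2 * n = 2 * n + 1 := by omega
    have e2 : (1:ℕ) + (2 * n + 1) = 2 * n + 2 := by omega
    rw [e1, e2, ← ih]
    simp only [add_comm, add_left_comm, add_assoc]

lemma no3AP_append {l₁ l₂ : List ℕ}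
    (hpar : ∀ x ∈ l₁, ∀ z ∈ l₂, ¬ (2 ∣ x + z))
    (h₁ : ¬ Has3AP l₁) (h₂ : ¬ Has3AP l₂) : ¬ Has3AP (l₁ ++ l₂) := by
  rintro ⟨x, y, z, hs, he⟩
  rw [List.sublist_append_iff] at hs
  obtain ⟨a, b, hab, ha, hb⟩ := hs
  rcases a with _ | ⟨p, _ | ⟨q, _ | ⟨r, a⟩⟩⟩
  · simp only [List.nil_append] at hab
    exact h₂ ⟨x, y, z, hab ▸ hb, he⟩
  · obtain ⟨rfl, rfl⟩ : p = x ∧ b = [y, z] := by simpa using hab.symm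
    exact hpar p (ha.mem (by simp)) z (hb.mem (by simp)) ⟨y, by omega⟩
  · obtain ⟨rfl, rfl, rfl⟩ : p = x ∧ q = y ∧ b = [z] := by simpa using hab.symm
    exact hpar p (ha.mem (by simp)) z (hb.mem (by simp)) ⟨q, by omega⟩
  · obtain ⟨rfl, rfl, rfl, rfl, rfl⟩ : p = x ∧ q = y ∧ r = z ∧ a = [] ∧ b = [] := by
      simpa using hab.symm
    exact h₁ ⟨p, q, r, by simpa using ha, he⟩

/-- If `l₁` is a 3AP-free permutation of the even numbers `{2, 4, ..., 2n}` and `l₂`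
is a 3AP-free permutation of the odd numbers `{1, 3, ..., 2n-1}`, then the
concatenation `l₁ ++ l₂` is a 3AP-free permutation of `{1, ..., 2n}`, and
`l₂ ++ l₁` is 3AP-free as well. -/
theorem concat_threeAPFree (n : ℕ) (hn : 0 < n) (l₁ l₂ : List ℕ)
    (h₁ : l₁.Perm ((List.range n).map (fun i => 2 * i + 2)))
    (h₁free : ¬ Has3AP l₁)
    (h₂ : l₂.Perm ((List.range n).map (fun i => 2 * i + 1)))
    (h₂free : ¬ Has3AP l₂) :
    (l₁ ++ l₂).Perm (List.range' 1 (2 * n)) ∧ ¬ Has3AP (l₁ ++ l₂) ∧ ¬ Has3AP (l₂ ++ l₁) := by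
  have mem₁ : ∀ x ∈ l₁, ∃ i, x = 2 * i + 2 := by
    intro x hx
    have := h₁.mem_iff.mp hx
    simp only [List.mem_map, List.mem_range] at this
    obtain ⟨i, -, hi⟩ := this
    exact ⟨i, hi.symm⟩
  have mem₂ : ∀ x ∈ l₂, ∃ i, x = 2 * i + 1 := by
    intro x hx
    have := h₂.mem_iff.mp hx
    simp only [List.mem_map, List.mem_range] at this
    obtain ⟨i, -, hi⟩ := this
    exact ⟨i, hi.symm⟩
  have hpar : ∀ x ∈ l₁, ∀ z ∈ l₂, ¬ (2 ∣ x + z) := by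
    intro x hx z hz
    obtain ⟨i, rfl⟩ := mem₁ x hx
    obtain ⟨j, rfl⟩ := mem₂ z hz
    omega
  have hpar' : ∀ x ∈ l₂, ∀ z ∈ l₁, ¬ (2 ∣ x + z) := by
    intro x hx z hz
    obtain ⟨i, rfl⟩ := mem₂ x hx
    obtain ⟨j, rfl⟩ := mem₁ z hz
    omega
  exact ⟨(h₁.append h₂).trans (perm_aux n),
    no3AP_append hpar h₁free h₂free, no3AP_append hpar' h₂free h₁free⟩
end

section
/- Every permutation of the set {1, 2, ..., 11} whose first term is 2 and whose second term is 1 contains, as a subsequence, a 3-term arithmetic progression with odd common difference. -/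
/-- Every permutation `t₁, ..., t₁₁` of `{1, ..., 11}` with `t₁ = 2` and `t₂ = 1`
contains, as a subsequence, a 3-term arithmetic progression with odd common
difference. -/
theorem perm_eleven_has_odd_3AP (f : Fin 11 → ℕ)
    (hinj : Function.Injective f) (hrange : Set.range f = Set.Icc 1 11)
    (h0 : f 0 = 2) (h1 : f 1 = 1) :
    ∃ i j k : Fin 11, i < j ∧ j < k ∧
      ((f j : ℤ) - (f i : ℤ) = (f k : ℤ) - (f j : ℤ)) ∧
      Odd ((f j : ℤ) - (f i : ℤ)) := by
  by_contra hc
  push_neg at hc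
  -- key : given positions i < j < k carrying values a, b, c of an odd-difference AP, False
  have key : ∀ (i j k : Fin 11) (a b c : ℕ), i < j → j < k →
      f i = a → f j = b → f k = c →
      ((b : ℤ) - a = (c : ℤ) - b) → Odd ((b : ℤ) - a) → False := by
    intro i j k a b c hij hjk hi hj hk heq hodd
    exact hc i j k hij hjk (by rw [hi, hj, hk]; exact_mod_cast heq)
      (by rw [hi, hj]; exact_mod_cast hodd)
  have hmem : ∀ v : ℕ, 1 ≤ v → v ≤ 11 → ∃ i, f i = v := by
    intro v hv1 hv2
    have : v ∈ Set.range f := by rw [hrange]; exact Set.mem_Icc.mpr ⟨hv1, hv2⟩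
    exact this
  obtain ⟨p3, hp3⟩ := hmem 3 (by norm_num) (by norm_num)
  obtain ⟨p4, hp4⟩ := hmem 4 (by norm_num) (by norm_num)
  obtain ⟨p5, hp5⟩ := hmem 5 (by norm_num) (by norm_num)
  obtain ⟨p6, hp6⟩ := hmem 6 (by norm_num) (by norm_num)
  obtain ⟨p7, hp7⟩ := hmem 7 (by norm_num) (by norm_num)
  obtain ⟨p8, hp8⟩ := hmem 8 (by norm_num) (by norm_num)
  obtain ⟨p9, hp9⟩ := hmem 9 (by norm_num) (by norm_num)
  obtain ⟨p10, hp10⟩ := hmem 10 (by norm_num) (by norm_num)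
  obtain ⟨p11, hp11⟩ := hmem 11 (by norm_num) (by norm_num)
  -- positions of values other than 2 and 1 are > 1 (hence also > 0)
  have hgt1 : ∀ (i : Fin 11) (v : ℕ), f i = v → v ≠ 2 → v ≠ 1 → 1 < i := by
    intro i v hi hv2 hv1
    have hne0 : i ≠ 0 := by intro h; rw [h, h0] at hi; exact hv2 hi.symm
    have hne1 : i ≠ 1 := by intro h; rw [h, h1] at hi; exact hv1 hi.symm
    rw [Fin.lt_def]
    have h0' : (i : ℕ) ≠ 0 := fun h => hne0 (Fin.ext h)
    have h1' : (i : ℕ) ≠ 1 := fun h => hne1 (Fin.ext h)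
    simp only [Fin.val_one]
    omega
  have hgt0 : ∀ (i j : Fin 11), 1 < i → (0 : Fin 11) < i := by
    intro i _ h
    exact lt_trans (by decide) h
  have g3 : 1 < p3 := hgt1 p3 3 hp3 (by norm_num) (by norm_num)
  have g4 : 1 < p4 := hgt1 p4 4 hp4 (by norm_num) (by norm_num)
  have g5 : 1 < p5 := hgt1 p5 5 hp5 (by norm_num) (by norm_num)
  have g6 : 1 < p6 := hgt1 p6 6 hp6 (by norm_num) (by norm_num)
  have ne_of : ∀ (i j : Fin 11) (a b : ℕ), f i = a → f j = b → a ≠ b → i ≠ j := by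
    intro i j a b hi hj hab h
    rw [h, hj] at hi
    exact hab hi.symm
  -- h34 : p4 < p3   (else AP 2,3,4 at positions 0 < p3 < p4)
  have h34 : p4 < p3 := by
    rcases lt_trichotomy p3 p4 with h | h | h
    · exact (key 0 p3 p4 2 3 4 (hgt0 p3 p3 g3) h h0 hp3 hp4 (by norm_num) (by decide)).elim
    · exact absurd h (ne_of p3 p4 3 4 hp3 hp4 (by norm_num))
    · exact h
  -- h74 : p7 < p4   (else AP 1,4,7 at positions 1 < p4 < p7)
  have h74 : p7 < p4 := by
    rcases lt_trichotomy p4 p7 with h | h | h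
    · exact (key 1 p4 p7 1 4 7 g4 h h1 hp4 hp7 (by norm_num) (by decide)).elim
    · exact absurd h (ne_of p4 p7 4 7 hp4 hp7 (by norm_num))
    · exact h
  -- h85 : p8 < p5   (else AP 2,5,8 at positions 0 < p5 < p8)
  have h85 : p8 < p5 := by
    rcases lt_trichotomy p5 p8 with h | h | h
    · exact (key 0 p5 p8 2 5 8 (hgt0 p5 p5 g5) h h0 hp5 hp8 (by norm_num) (by decide)).elim
    · exact absurd h (ne_of p5 p8 5 8 hp5 hp8 (by norm_num))
    · exact h
  -- h116 : p11 < p6  (else AP 1,6,11 at positions 1 < p6 < p11)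
  have h116 : p11 < p6 := by
    rcases lt_trichotomy p6 p11 with h | h | h
    · exact (key 1 p6 p11 1 6 11 g6 h h1 hp6 hp11 (by norm_num) (by decide)).elim
    · exact absurd h (ne_of p6 p11 6 11 hp6 hp11 (by norm_num))
    · exact h
  -- h45 : p4 < p5   (else AP 5,4,3 at positions p5 < p4 < p3)
  have h45 : p4 < p5 := by
    rcases lt_trichotomy p5 p4 with h | h | h
    · exact (key p5 p4 p3 5 4 3 h h34 hp5 hp4 hp3 (by norm_num) (by decide)).elim
    · exact absurd h (ne_of p5 p4 5 4 hp5 hp4 (by norm_num))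
    · exact h
  -- h65 : p6 < p5   (else AP 4,5,6 at positions p4 < p5 < p6)
  have h65 : p6 < p5 := by
    rcases lt_trichotomy p5 p6 with h | h | h
    · exact (key p4 p5 p6 4 5 6 h45 h hp4 hp5 hp6 (by norm_num) (by decide)).elim
    · exact absurd h (ne_of p5 p6 5 6 hp5 hp6 (by norm_num))
    · exact h
  -- h811 : p8 < p11  (else AP 11,8,5 at positions p11 < p8 < p5)
  have h811 : p8 < p11 := by
    rcases lt_trichotomy p11 p8 with h | h | h
    · exact (key p11 p8 p5 11 8 5 h h85 hp11 hp8 hp5 (by norm_num) (by decide)).elim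
    · exact absurd h.symm (ne_of p8 p11 8 11 hp8 hp11 (by norm_num))
    · exact h
  -- h67 : p6 < p7   (else AP 7,6,5 at positions p7 < p6 < p5)
  have h67 : p6 < p7 := by
    rcases lt_trichotomy p7 p6 with h | h | h
    · exact (key p7 p6 p5 7 6 5 h h65 hp7 hp6 hp5 (by norm_num) (by decide)).elim
    · exact absurd h.symm (ne_of p6 p7 6 7 hp6 hp7 (by norm_num))
    · exact h
  -- h69 : p6 < p9   (else AP 9,6,3 at positions p9 < p6 < p3)
  have h69 : p6 < p9 := by
    rcases lt_trichotomy p9 p6 with h | h | h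
    · exact (key p9 p6 p3 9 6 3 h
        (lt_trans h67 (lt_trans h74 h34)) hp9 hp6 hp3 (by norm_num) (by decide)).elim
    · exact absurd h.symm (ne_of p6 p9 6 9 hp6 hp9 (by norm_num))
    · exact h
  -- h109 : p10 < p9  (else AP 8,9,10 at positions p8 < p9 < p10)
  have h109 : p10 < p9 := by
    rcases lt_trichotomy p9 p10 with h | h | h
    · exact (key p8 p9 p10 8 9 10
        (lt_trans h811 (lt_trans h116 h69)) h hp8 hp9 hp10 (by norm_num) (by decide)).elim
    · exact absurd h (ne_of p9 p10 9 10 hp9 hp10 (by norm_num))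
    · exact h
  -- h1011 : p10 < p11  (else AP 11,10,9 at positions p11 < p10 < p9)
  have h1011 : p10 < p11 := by
    rcases lt_trichotomy p11 p10 with h | h | h
    · exact (key p11 p10 p9 11 10 9 h h109 hp11 hp10 hp9 (by norm_num) (by decide)).elim
    · exact absurd h.symm (ne_of p10 p11 10 11 hp10 hp11 (by norm_num))
    · exact h
  -- final contradiction: p10 < p11 < p6 < p7 < p4, values 10, 7, 4 form AP with d = -3
  exact key p10 p7 p4 10 7 4 (lt_trans h1011 (lt_trans h116 h67)) h74
    hp10 hp7 hp4 (by norm_num) (by decide)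
end

section
/- Every permutation of the positive integers contains, as a subsequence, a 3-term arithmetic progression with odd common difference. That is, for every bijection a : ℕ⁺ → ℕ⁺ there exist indices i < j < k with a(j) − a(i) = a(k) − a(j) and a(j) − a(i) odd. -/
/-!
Suppose the permutation has no odd 3-AP and let `σ` be its inverse, so `σ v` is the position of
the value `v`. Every large value `w` is the last term of an odd AP `t, m, w` with `t ≤ 4`. Once `w`
is large, `m` and `w` both sit after all of `1, …, 4`, so `t` comes first and avoiding the AP
forces `σ w < σ m` with `m < w`. Descending along such steps bounds every position
by the positions of finitely many small values, which is absurd since `σ` is surjective.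
-/

open Function

theorem bddAbove_range_of_forall_gt_exists_lt {α β : Type*} [LinearOrder α] [WellFoundedLT α]
    [LocallyFiniteOrderBot α] [Preorder β] [IsDirected β (· ≤ ·)] [Nonempty β] {f : α → β}
    (C : α) (h : ∀ w, C < w → ∃ m < w, f w < f m) : BddAbove (Set.range f) := by
  obtain ⟨b, hb⟩ := ((Set.finite_Iic C).image f).bddAbove
  refine ⟨b, Set.forall_mem_range.2 fun w => ?_⟩
  induction w using WellFoundedLT.induction with
  | _ w ih =>
    rcases le_or_gt w C with hwC | hCw
    · exact hb (Set.mem_image_of_mem f hwC)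
    · obtain ⟨m, hmw, hfm⟩ := h w hCw
      exact (hfm.trans_le (ih m hmw)).le

theorem Function.Injective.exists_forall_gt_lt {α β : Type*} [LinearOrder α] [Nonempty α]
    [LinearOrder β] [LocallyFiniteOrderBot β] {σ : α → β} (hσ : Injective σ) (Q : β) :
    ∃ B, ∀ v, B < v → Q < σ v := by
  obtain ⟨B, hB⟩ := ((Set.finite_Iic Q).preimage hσ.injOn).bddAbove
  exact ⟨B, fun v hBv => lt_of_not_ge fun hvQ => (hB hvQ).not_gt hBv⟩

theorem PNat.exists_le_four_odd_ap (w : ℕ+) :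
    ∃ t m : ℕ+, t ≤ 4 ∧ 2 * m = t + w ∧ Odd ((m : ℤ) - t) := by
  -- `t ≡ w + 2 [MOD 4]` makes both `t + w` and `w - t` congruent to `2` modulo `4`
  obtain ⟨t, ht⟩ : ∃ t : ℕ+, (t : ℕ) = (w + 1) % 4 + 1 := ⟨⟨_, Nat.succ_pos _⟩, rfl⟩
  obtain ⟨m, hm⟩ : ∃ m : ℕ+, (m : ℕ) = (t + w) / 2 := ⟨⟨(t + w) / 2, by omega⟩, rfl⟩
  refine ⟨t, m, ?_, ?_, ?_⟩
  · rw [← PNat.coe_le_coe, ht, PNat.val_ofNat]; omega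
  · rw [← PNat.coe_inj, PNat.mul_coe, PNat.add_coe, hm, ht, PNat.val_ofNat]; omega
  · rw [Int.odd_iff]; omega

theorem exists_forall_gt_exists_lt_lt_of_no_odd_ap {β : Type*} [LinearOrder β]
    [LocallyFiniteOrderBot β] {σ : ℕ+ → β} (hσ : Injective σ)
    (hAP : ∀ t m w : ℕ+, (m : ℤ) - t = (w : ℤ) - m → Odd ((m : ℤ) - t) →
      σ t < σ m → ¬σ m < σ w) :
    ∃ C, ∀ w, C < w → ∃ m < w, σ w < σ m := by
  have : Nonempty β := ⟨σ 1⟩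
  obtain ⟨Q, hQ⟩ := ((Set.finite_Iic (4 : ℕ+)).image σ).bddAbove
  obtain ⟨B, hB⟩ := hσ.exists_forall_gt_lt Q
  refine ⟨2 * B + 4, fun w hw => ?_⟩
  obtain ⟨t, m, ht, hm, hodd⟩ := w.exists_le_four_odd_ap
  have hm' : 2 * (m : ℕ) = t + w := by exact_mod_cast congrArg PNat.val hm
  have ht' : (t : ℕ) ≤ 4 := by exact_mod_cast ht
  have hw' : 2 * (B : ℕ) + 4 < w := by exact_mod_cast hw
  have hmw : m < w := by rw [← PNat.coe_lt_coe]; omega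
  have hBm : B < m := by rw [← PNat.coe_lt_coe]; omega
  have htm : σ t < σ m := (hQ (Set.mem_image_of_mem σ ht)).trans_lt (hB m hBm)
  refine ⟨m, hmw, (lt_or_gt_of_ne (hσ.ne hmw.ne')).resolve_right ?_⟩
  exact hAP t m w (by omega) hodd htm

/-- Every permutation of the positive integers contains, as a subsequence, a
3-term arithmetic progression with odd common difference. -/
theorem perm_pnat_has_odd_3AP (a : ℕ+ → ℕ+) (ha : Function.Bijective a) :
    ∃ i j k : ℕ+, i < j ∧ j < k ∧
      (((a j : ℕ) : ℤ) - ((a i : ℕ) : ℤ) = ((a k : ℕ) : ℤ) - ((a j : ℕ) : ℤ)) ∧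
      Odd (((a j : ℕ) : ℤ) - ((a i : ℕ) : ℤ)) := by
  by_contra! hfree
  set σ := (Equiv.ofBijective a ha).symm
  have ha_σ : ∀ v, a (σ v) = v := Equiv.ofBijective_apply_symm_apply a ha
  obtain ⟨C, hC⟩ := exists_forall_gt_exists_lt_lt_of_no_odd_ap σ.injective
    fun t m w heq hodd htm hmw => hfree _ _ _ htm hmw (by simpa only [ha_σ]) (by simpa only [ha_σ])
  exact not_bddAbove_univ (σ.surjective.range_eq ▸ bddAbove_range_of_forall_gt_exists_lt C hC)
end

section
/- There exists a permutation of the positive integers that contains no 4-term arithmetic progression with odd common difference as a subsequence. That is, there is a bijection a : ℕ⁺ → ℕ⁺ such that there are no indices i₁ < i₂ < i₃ < i₄ with a(i₂) − a(i₁) = a(i₃) − a(i₂) = a(i₄) − a(i₃) and this common difference odd. -/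
set_option maxHeartbeats 1000000

/-- The underlying permutation of ℕ (0-indexed positions): blocks `4k+1, 4k+3, 2k+2`. -/
def permF (n : ℕ) : ℕ :=
  if n % 3 = 0 then 4 * (n / 3) + 1
  else if n % 3 = 1 then 4 * (n / 3) + 3
  else 2 * (n / 3) + 2

/-- Inverse of `permF` on positive naturals. -/
def permG (m : ℕ) : ℕ :=
  if m % 2 = 0 then 3 * (m / 2) - 1
  else if m % 4 = 1 then 3 * (m / 4)
  else 3 * (m / 4) + 1

lemma permF_pos (n : ℕ) : 0 < permF n := by
  unfold permF; split_ifs <;> omega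

lemma permF_cases (n : ℕ) :
    (n % 3 = 0 ∧ permF n = 4 * (n / 3) + 1) ∨
    (n % 3 = 1 ∧ permF n = 4 * (n / 3) + 3) ∨
    (n % 3 = 2 ∧ permF n = 2 * (n / 3) + 2) := by
  unfold permF; split_ifs <;> omega

lemma permG_permF (n : ℕ) : permG (permF n) = n := by
  unfold permF permG; split_ifs <;> omega

lemma permF_permG (m : ℕ) (hm : 0 < m) : permF (permG m) = m := by
  unfold permF permG; split_ifs <;> omega

/-- There exists a permutation of the positive integers containing no 4-term
arithmetic progression with odd common difference as a subsequence. -/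
theorem exists_perm_pnat_no_odd_4AP :
    ∃ a : ℕ+ → ℕ+, Function.Bijective a ∧
      ¬ ∃ i₁ i₂ i₃ i₄ : ℕ+, i₁ < i₂ ∧ i₂ < i₃ ∧ i₃ < i₄ ∧
        (((a i₂ : ℕ) : ℤ) - ((a i₁ : ℕ) : ℤ) = ((a i₃ : ℕ) : ℤ) - ((a i₂ : ℕ) : ℤ)) ∧
        (((a i₃ : ℕ) : ℤ) - ((a i₂ : ℕ) : ℤ) = ((a i₄ : ℕ) : ℤ) - ((a i₃ : ℕ) : ℤ)) ∧
        Odd (((a i₂ : ℕ) : ℤ) - ((a i₁ : ℕ) : ℤ)) := by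
  refine ⟨fun n => ⟨permF ((n : ℕ) - 1), permF_pos _⟩, ⟨?_, ?_⟩, ?_⟩
  · -- injective
    intro n m h
    have h' : permF ((n : ℕ) - 1) = permF ((m : ℕ) - 1) := congrArg Subtype.val h
    have h2 : (n : ℕ) - 1 = (m : ℕ) - 1 := by
      have := congrArg permG h'
      simpa [permG_permF] using this
    have hn := n.pos
    have hm := m.pos
    exact PNat.coe_injective (show (n : ℕ) = (m : ℕ) by omega)
  · -- surjective
    intro m
    refine ⟨⟨permG (m : ℕ) + 1, Nat.succ_pos _⟩, ?_⟩
    apply PNat.coe_injective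
    show permF (permG (m : ℕ) + 1 - 1) = (m : ℕ)
    simp only [Nat.add_sub_cancel]
    exact permF_permG _ m.2
  · rintro ⟨i₁, i₂, i₃, i₄, h12, h23, h34, e1, e2, ⟨k, hk⟩⟩
    obtain ⟨n₁, hn1⟩ : ∃ n, (i₁ : ℕ) = n + 1 := ⟨(i₁ : ℕ) - 1, by have := i₁.pos; omega⟩
    obtain ⟨n₂, hn2⟩ : ∃ n, (i₂ : ℕ) = n + 1 := ⟨(i₂ : ℕ) - 1, by have := i₂.pos; omega⟩
    obtain ⟨n₃, hn3⟩ : ∃ n, (i₃ : ℕ) = n + 1 := ⟨(i₃ : ℕ) - 1, by have := i₃.pos; omega⟩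
    obtain ⟨n₄, hn4⟩ : ∃ n, (i₄ : ℕ) = n + 1 := ⟨(i₄ : ℕ) - 1, by have := i₄.pos; omega⟩
    have l12 : n₁ < n₂ := by have : (i₁ : ℕ) < (i₂ : ℕ) := h12; omega
    have l23 : n₂ < n₃ := by have : (i₂ : ℕ) < (i₃ : ℕ) := h23; omega
    have l34 : n₃ < n₄ := by have : (i₃ : ℕ) < (i₄ : ℕ) := h34; omega
    simp only [PNat.mk_coe, hn1, hn2, hn3, hn4, Nat.add_sub_cancel] at e1 e2 hk
    rcases permF_cases n₁ with ⟨r1, v1⟩ | ⟨r1, v1⟩ | ⟨r1, v1⟩ <;>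
      rcases permF_cases n₂ with ⟨r2, v2⟩ | ⟨r2, v2⟩ | ⟨r2, v2⟩ <;>
      rcases permF_cases n₃ with ⟨r3, v3⟩ | ⟨r3, v3⟩ | ⟨r3, v3⟩ <;>
      rcases permF_cases n₄ with ⟨r4, v4⟩ | ⟨r4, v4⟩ | ⟨r4, v4⟩ <;>
      omega
end

section
/- Every permutation of the positive integers contains a 3-term arithmetic progression as a subsequence: for every bijection a : ℕ⁺ → ℕ⁺ there exist indices i < j < k with a(i) + a(k) = 2·a(j) and a(i) ≠ a(j). -/
/-- Every permutation of the positive integers contains a 3-term arithmetic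
progression (with nonzero common difference) as a subsequence. -/
theorem perm_pnat_has_3AP (a : ℕ+ → ℕ+) (ha : Function.Bijective a) :
    ∃ i j k : ℕ+, i < j ∧ j < k ∧
      (a i : ℕ) + (a k : ℕ) = 2 * (a j : ℕ) ∧ a i ≠ a j := by
  by_contra hcon
  push_neg at hcon
  obtain ⟨t, ht⟩ := ha.2 1
  set M := (Finset.Icc 1 t).sup (fun s => (a s : ℕ)) with hMdef
  have hbound : ∀ q : ℕ+, q ≤ t → (a q : ℕ) ≤ M := fun q hq =>
    Finset.le_sup (f := fun s => (a s : ℕ)) (Finset.mem_Icc.mpr ⟨q.one_le, hq⟩)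
  have hat : (a t : ℕ) = 1 := by rw [ht]; rfl
  have hM1 : 1 ≤ M := by have := hbound t le_rfl; omega
  have key : ∀ p : ℕ+, t < p → (a p : ℕ) ≤ M := by
    intro p
    induction p using PNat.strongInductionOn with
    | _ p IH =>
      intro htp
      by_contra hgt
      push_neg at hgt
      have hap2 : 2 ≤ (a p : ℕ) := by omega
      obtain ⟨q, hq⟩ := ha.2 ⟨2 * (a p : ℕ) - 1, by omega⟩
      have hqn : (a q : ℕ) = 2 * (a p : ℕ) - 1 := by rw [hq]; rfl
      have hqM : M < (a q : ℕ) := by omega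
      have htq : t < q := by
        by_contra hle
        push_neg at hle
        have := hbound q hle
        omega
      rcases lt_trichotomy q p with h1 | h2 | h3
      · have := IH q h1 htq
        omega
      · rw [h2] at hqn; omega
      · have hsum : (a t : ℕ) + (a q : ℕ) = 2 * (a p : ℕ) := by omega
        have := hcon t p q htp h3 hsum
        rw [this] at hat
        omega
  obtain ⟨q, hq⟩ := ha.2 ⟨M + 1, by omega⟩
  have hqn : (a q : ℕ) = M + 1 := by rw [hq]; rfl
  rcases le_or_gt q t with h | h
  · have := hbound q h; omega
  · have := key q h; omega
end

section
/- For every integer a ≥ 2, the set S^(a) = ⋃_{i ≥ 0} {a^(2i), a^(2i)+1, ..., a^(2i+1)} is 4-free: there exists a bijective enumeration of S^(a) that contains no 4-term arithmetic progression as a subsequence. -/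
/-- `f : ℕ → ℕ` is a (bijective) enumeration of the set `S`. -/
def IsPermOf (f : ℕ → ℕ) (S : Set ℕ) : Prop :=
  Function.Injective f ∧ Set.range f = S

/-- A set `S` of naturals is 4-free if some enumeration of `S` contains no
4-term arithmetic progression (with nonzero, possibly negative, common
difference) as a subsequence. -/
def FourFree (S : Set ℕ) : Prop :=
  ∃ f : ℕ → ℕ, IsPermOf f S ∧
    ¬ ∃ i₁ i₂ i₃ i₄ : ℕ, i₁ < i₂ ∧ i₂ < i₃ ∧ i₃ < i₄ ∧
      ((f i₂ : ℤ) - (f i₁ : ℤ) = (f i₃ : ℤ) - (f i₂ : ℤ)) ∧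
      ((f i₃ : ℤ) - (f i₂ : ℤ) = (f i₄ : ℤ) - (f i₃ : ℤ)) ∧
      f i₁ ≠ f i₂

/-!
Order each block `[a ^ (2b), a ^ (2b+1)]` so that it has no 3-term progression (sort the offsets
by their bit reversal), and list the blocks one after the other. Since `a ≥ 2`, every element of a
later block is at least twice every element of an earlier one, so if two consecutive terms `x, y`
of a progression of positive integers lie in different blocks, the term before them would be
`2x - y ≤ 0`. Hence the last three terms of a 4-term progression lie in a single block, which is
impossible.
-/

def bitRev : ℕ → ℕ → ℕ
  | 0, _ => 0
  | m + 1, x => x % 2 * 2 ^ m + bitRev m (x / 2)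

theorem bitRev_lt (m x : ℕ) : bitRev m x < 2 ^ m := by
  induction m generalizing x with
  | zero => simp [bitRev]
  | succ m ih =>
    have := ih (x / 2)
    rw [bitRev, pow_succ]
    rcases Nat.mod_two_eq_zero_or_one x with h | h <;> rw [h] <;> omega

theorem mod_two_le_of_bitRev_le {m x y : ℕ} (h : bitRev (m + 1) x ≤ bitRev (m + 1) y) :
    x % 2 ≤ y % 2 := by
  by_contra! hlt
  have := bitRev_lt m (x / 2)
  have := bitRev_lt m (y / 2)
  rw [bitRev, bitRev, (by omega : x % 2 = 1), (by omega : y % 2 = 0)] at h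
  omega

/-- The leading bit of `bitRev` is the parity, so a chain `x ≤ y ≤ z` of reversals with `x + z`
even forces `x, y, z` to have equal parity, and the chain passes to `x / 2, y / 2, z / 2`. -/
theorem not_bitRev_le_le_of_add_eq {m x y z : ℕ} (hx : x < 2 ^ m) (hz : z < 2 ^ m) (hxz : x ≠ z)
    (hap : x + z = 2 * y) : ¬ (bitRev m x ≤ bitRev m y ∧ bitRev m y ≤ bitRev m z) := by
  induction m generalizing x y z with
  | zero => simp at hx hz; omega
  | succ m ih =>
    rintro ⟨hxy, hyz⟩
    have := mod_two_le_of_bitRev_le hxy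
    have := mod_two_le_of_bitRev_le hyz
    have hx2 : x % 2 = y % 2 := by omega
    have hz2 : z % 2 = y % 2 := by omega
    simp only [bitRev, hx2, hz2, Nat.add_le_add_iff_left] at hxy hyz
    rw [pow_succ] at hx hz
    exact ih (by omega) (by omega) (by omega) (by omega) ⟨hxy, hyz⟩

-- Reversing `n` bits is wasteful but suffices, since every offset is `< n < 2 ^ n`.
def bitRevSort (n : ℕ) : List ℕ :=
  (List.range n).mergeSort fun x y => bitRev n x ≤ bitRev n y

theorem bitRevSort_perm (n : ℕ) : (bitRevSort n).Perm (List.range n) :=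
  List.mergeSort_perm _ _

theorem nodup_bitRevSort (n : ℕ) : (bitRevSort n).Nodup :=
  (bitRevSort_perm n).nodup_iff.2 List.nodup_range

theorem pairwise_bitRevSort (n : ℕ) :
    (bitRevSort n).Pairwise fun x y => bitRev n x ≤ bitRev n y := by
  unfold bitRevSort
  simpa using List.pairwise_mergeSort (le := fun x y => decide (bitRev n x ≤ bitRev n y))
    (fun _ _ _ hxy hyz => by simp only [decide_eq_true_eq] at *; omega)
    (fun _ _ => by simp only [Bool.or_eq_true, decide_eq_true_eq]; omega) (List.range n)

-- Constant progressions count as well; this is harmless for lists without duplicates.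
def NoThreeAP (l : List ℕ) : Prop :=
  ∀ x y z, [x, y, z].Sublist l → x + z ≠ 2 * y

def NoFourAP (l : List ℕ) : Prop :=
  ∀ w x y z, [w, x, y, z].Sublist l → w + y = 2 * x → x + z ≠ 2 * y

theorem noThreeAP_bitRevSort (n : ℕ) : NoThreeAP (bitRevSort n) := by
  intro x y z hsub hap
  have hnodup := hsub.nodup (nodup_bitRevSort n)
  have hsorted := (pairwise_bitRevSort n).sublist hsub
  have hmem : ∀ u ∈ [x, y, z], u < n := fun u hu => by
    simpa [(bitRevSort_perm n).mem_iff] using hsub.subset hu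
  simp only [List.nodup_cons, List.mem_cons, List.pairwise_cons] at hnodup hsorted hmem
  exact not_bitRev_le_le_of_add_eq ((hmem x (by simp)).trans n.lt_two_pow_self)
    ((hmem z (by simp)).trans n.lt_two_pow_self) (by simp_all) hap
    ⟨hsorted.1 y (by simp), hsorted.2.1 z (by simp)⟩

theorem NoThreeAP.map_add {l : List ℕ} (h : NoThreeAP l) (c : ℕ) :
    NoThreeAP (l.map (c + ·)) := by
  intro x y z hsub
  obtain ⟨l', hl', he⟩ := List.sublist_map_iff.1 hsub
  rcases l' with _ | ⟨x', _ | ⟨y', _ | ⟨z', _ | _⟩⟩⟩ <;> simp at he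
  obtain ⟨rfl, rfl, rfl⟩ := he
  have := h x' y' z' hl'
  omega

theorem NoFourAP.append {l r : List ℕ} (hl : NoFourAP l) (hr : NoThreeAP r)
    (hpos : ∀ x ∈ l, 0 < x) (hdouble : ∀ x ∈ l, ∀ y ∈ r, 2 * x ≤ y) : NoFourAP (l ++ r) := by
  intro w x y z hsub hwy hxz
  obtain ⟨l₁, l₂, hsplit, hl₁, hl₂⟩ := List.sublist_append_iff.1 hsub
  rcases l₁ with _ | ⟨w', _ | ⟨x', _ | ⟨y', _ | ⟨z', _ | _⟩⟩⟩⟩ <;> simp at hsplit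
  · subst hsplit
    exact hr x y z ((List.sublist_cons_self _ _).trans hl₂) hxz
  · obtain ⟨rfl, rfl⟩ := hsplit
    exact hr x y z hl₂ hxz
  · obtain ⟨rfl, rfl, rfl⟩ := hsplit
    have := hpos w (hl₁.subset (by simp))
    have := hdouble x (hl₁.subset (by simp)) y (hl₂.subset (by simp))
    omega
  · obtain ⟨rfl, rfl, rfl, rfl⟩ := hsplit
    have := hpos x (hl₁.subset (by simp))
    have := hdouble y (hl₁.subset (by simp)) z (hl₂.subset (by simp))
    omega
  · obtain ⟨rfl, rfl, rfl, rfl, rfl⟩ := hsplit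
    exact hl w x y z hl₁ hwy hxz

section concatBlocks

variable {α : Type*} (B : ℕ → List α)

def concatBlocks : ℕ → List α
  | 0 => []
  | N + 1 => concatBlocks N ++ B N

theorem mem_concatBlocks {x : α} {N : ℕ} : x ∈ concatBlocks B N ↔ ∃ b < N, x ∈ B b := by
  induction N with
  | zero => simp [concatBlocks]
  | succ N ih => simp [concatBlocks, ih, Nat.le_iff_lt_or_eq, or_and_right, exists_or]

theorem concatBlocks_prefix {N N' : ℕ} (h : N ≤ N') :
    concatBlocks B N <+: concatBlocks B N' := by
  induction N', h using Nat.le_induction with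
  | base => exact List.prefix_refl _
  | succ N' _ ih => exact ih.trans (List.prefix_append _ _)

variable {B}

theorem le_length_concatBlocks (hB : ∀ b, B b ≠ []) (N : ℕ) :
    N ≤ (concatBlocks B N).length := by
  induction N with
  | zero => simp [concatBlocks]
  | succ N ih =>
    have := List.length_pos_iff.2 (hB N)
    simp only [concatBlocks, List.length_append]
    omega

theorem nodup_concatBlocks (hnodup : ∀ b, (B b).Nodup)
    (hdisj : ∀ b b', b < b' → ∀ x ∈ B b, ∀ y ∈ B b', x ≠ y) (N : ℕ) :
    (concatBlocks B N).Nodup := by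
  induction N with
  | zero => simp [concatBlocks]
  | succ N ih =>
    refine List.nodup_append.2 ⟨ih, hnodup N, fun x hx y hy => ?_⟩
    obtain ⟨b, hb, hx⟩ := (mem_concatBlocks B).1 hx
    exact hdisj b N hb x hx y hy

-- The infinite word `B 0 ++ B 1 ++ ⋯`; when no block is empty, the first `n + 1` blocks reach
-- past position `n`, so `default` is never returned.
def concatSeq [Inhabited α] (B : ℕ → List α) (n : ℕ) : α :=
  (concatBlocks B (n + 1)).getD n default

variable [Inhabited α]

theorem concatSeq_eq_getElem (hB : ∀ b, B b ≠ []) {N n : ℕ}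
    (hn : n < (concatBlocks B N).length) : concatSeq B n = (concatBlocks B N)[n] := by
  have hn' : n < (concatBlocks B (n + 1)).length := le_length_concatBlocks hB (n + 1)
  rw [concatSeq, List.getD_eq_getElem _ _ hn',
    (concatBlocks_prefix B (le_max_left _ N)).getElem hn',
    (concatBlocks_prefix B (le_max_right (n + 1) N)).getElem hn]

theorem concatSeq_injective (hB : ∀ b, B b ≠ []) (hnodup : ∀ b, (B b).Nodup)
    (hdisj : ∀ b b', b < b' → ∀ x ∈ B b, ∀ y ∈ B b', x ≠ y) : (concatSeq B).Injective := by
  intro n n' h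
  have hlen := le_length_concatBlocks hB (max n n' + 1)
  rw [concatSeq_eq_getElem hB (N := max n n' + 1) (by omega),
    concatSeq_eq_getElem hB (N := max n n' + 1) (by omega)] at h
  exact (nodup_concatBlocks hnodup hdisj _).getElem_inj_iff.1 h

theorem range_concatSeq (hB : ∀ b, B b ≠ []) :
    Set.range (concatSeq B) = {x | ∃ b, x ∈ B b} := by
  ext x
  constructor
  · rintro ⟨n, rfl⟩
    have hn : n < (concatBlocks B (n + 1)).length := le_length_concatBlocks hB (n + 1)
    obtain ⟨b, -, hb⟩ := (mem_concatBlocks B).1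
      ((concatSeq_eq_getElem hB hn) ▸ List.getElem_mem hn)
    exact ⟨b, hb⟩
  · rintro ⟨b, hb⟩
    obtain ⟨n, hn, rfl⟩ :=
      List.mem_iff_getElem.1 ((mem_concatBlocks B (N := b + 1)).2 ⟨b, b.lt_succ_self, hb⟩)
    exact ⟨n, concatSeq_eq_getElem hB hn⟩

theorem concatSeq_sublist_concatBlocks (hB : ∀ b, B b ≠ []) {i₁ i₂ i₃ i₄ : ℕ} (h₁₂ : i₁ < i₂)
    (h₂₃ : i₂ < i₃) (h₃₄ : i₃ < i₄) :
    [concatSeq B i₁, concatSeq B i₂, concatSeq B i₃, concatSeq B i₄].Sublist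
      (concatBlocks B (i₄ + 1)) := by
  have hlen := le_length_concatBlocks hB (i₄ + 1)
  simp only [concatSeq_eq_getElem hB (N := i₄ + 1) (by omega : i₁ < _),
    concatSeq_eq_getElem hB (N := i₄ + 1) (by omega : i₂ < _),
    concatSeq_eq_getElem hB (N := i₄ + 1) (by omega : i₃ < _),
    concatSeq_eq_getElem hB (N := i₄ + 1) (by omega : i₄ < _)]
  exact List.map_getElem_sublist
    (is := [⟨i₁, by omega⟩, ⟨i₂, by omega⟩, ⟨i₃, by omega⟩, ⟨i₄, by omega⟩]) (by simp; omega)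

end concatBlocks

theorem noFourAP_concatBlocks {B : ℕ → List ℕ} (hfree : ∀ b, NoThreeAP (B b))
    (hpos : ∀ b, ∀ x ∈ B b, 0 < x) (hdouble : ∀ b b', b < b' → ∀ x ∈ B b, ∀ y ∈ B b', 2 * x ≤ y)
    (N : ℕ) : NoFourAP (concatBlocks B N) := by
  induction N with
  | zero => simp [NoFourAP, concatBlocks]
  | succ N ih =>
    refine ih.append (hfree N) (fun x hx => ?_) (fun x hx => ?_) <;>
      obtain ⟨b, hb, hx⟩ := (mem_concatBlocks B).1 hx
    exacts [hpos b x hx, hdouble b N hb x hx]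

theorem fourFree_of_blocks {B : ℕ → List ℕ} (hB : ∀ b, B b ≠ []) (hnodup : ∀ b, (B b).Nodup)
    (hfree : ∀ b, NoThreeAP (B b)) (hpos : ∀ b, ∀ x ∈ B b, 0 < x)
    (hdouble : ∀ b b', b < b' → ∀ x ∈ B b, ∀ y ∈ B b', 2 * x ≤ y) :
    FourFree {x | ∃ b, x ∈ B b} := by
  have hdisj : ∀ b b', b < b' → ∀ x ∈ B b, ∀ y ∈ B b', x ≠ y := fun b b' hbb' x hx y hy => by
    have := hpos b x hx
    have := hdouble b b' hbb' x hx y hy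
    omega
  refine ⟨concatSeq B, ⟨concatSeq_injective hB hnodup hdisj, range_concatSeq hB⟩, ?_⟩
  rintro ⟨i₁, i₂, i₃, i₄, h₁₂, h₂₃, h₃₄, e₁, e₂, -⟩
  exact noFourAP_concatBlocks hfree hpos hdouble _ _ _ _ _
    (concatSeq_sublist_concatBlocks hB h₁₂ h₂₃ h₃₄) (by omega) (by omega)

def bitRevBlock (a b : ℕ) : List ℕ :=
  (bitRevSort (a ^ (2 * b + 1) - a ^ (2 * b) + 1)).map (a ^ (2 * b) + ·)

section bitRevBlock

variable {a : ℕ}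

theorem mem_bitRevBlock (ha : 0 < a) {b x : ℕ} :
    x ∈ bitRevBlock a b ↔ x ∈ Set.Icc (a ^ (2 * b)) (a ^ (2 * b + 1)) := by
  have : a ^ (2 * b) ≤ a ^ (2 * b + 1) := Nat.pow_le_pow_right ha (by omega)
  simp only [bitRevBlock, List.mem_map, (bitRevSort_perm _).mem_iff, List.mem_range, Set.mem_Icc]
  constructor
  · rintro ⟨y, hy, rfl⟩
    omega
  · rintro ⟨h₁, h₂⟩
    exact ⟨x - a ^ (2 * b), by omega, by omega⟩

theorem bitRevBlock_ne_nil (ha : 0 < a) (b : ℕ) : bitRevBlock a b ≠ [] :=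
  List.ne_nil_of_mem ((mem_bitRevBlock ha).2 ⟨le_rfl, Nat.pow_le_pow_right ha (by omega)⟩)

theorem nodup_bitRevBlock (a b : ℕ) : (bitRevBlock a b).Nodup :=
  (nodup_bitRevSort _).map (add_right_injective _)

theorem noThreeAP_bitRevBlock (a b : ℕ) : NoThreeAP (bitRevBlock a b) :=
  (noThreeAP_bitRevSort _).map_add _

theorem pos_of_mem_bitRevBlock (ha : 0 < a) {b x : ℕ} (hx : x ∈ bitRevBlock a b) : 0 < x :=
  (pow_pos ha _).trans_le ((mem_bitRevBlock ha).1 hx).1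

theorem two_mul_le_of_mem_bitRevBlock (ha : 2 ≤ a) {b b' x y : ℕ} (hbb' : b < b')
    (hx : x ∈ bitRevBlock a b) (hy : y ∈ bitRevBlock a b') : 2 * x ≤ y := by
  rw [mem_bitRevBlock (by omega)] at hx hy
  calc 2 * x ≤ a * a ^ (2 * b + 1) := Nat.mul_le_mul ha hx.2
    _ = a ^ (2 * b + 2) := by ring
    _ ≤ a ^ (2 * b') := Nat.pow_le_pow_right (by omega) (by omega)
    _ ≤ y := hy.1

theorem setOf_mem_bitRevBlock (ha : 0 < a) :
    {x | ∃ b, x ∈ bitRevBlock a b} = ⋃ i : ℕ, Set.Icc (a ^ (2 * i)) (a ^ (2 * i + 1)) := by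
  ext
  simp [mem_bitRevBlock ha]

end bitRevBlock

/-- For every integer `a ≥ 2`, the set `⋃ i, {a^(2i), ..., a^(2i+1)}` is 4-free. -/
theorem S_a_fourFree (a : ℕ) (ha : 2 ≤ a) :
    FourFree (⋃ i : ℕ, Set.Icc (a ^ (2 * i)) (a ^ (2 * i + 1))) := by
  have ha₀ : 0 < a := by omega
  rw [← setOf_mem_bitRevBlock ha₀]
  exact fourFree_of_blocks (bitRevBlock_ne_nil ha₀) (nodup_bitRevBlock a)
    (noThreeAP_bitRevBlock a) (fun _ _ => pos_of_mem_bitRevBlock ha₀)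
    (fun _ _ hbb' _ hx _ hy => two_mul_le_of_mem_bitRevBlock ha hbb' hx hy)
end

section
/- There exists a 3-free set of positive integers whose upper density is at least 1/2. Hence α(3) = sup{upper density of S : S is 3-free} ≥ 1/2. -/
/-!
Cut `ℕ` into a gap of length `2 ^ k` followed by a block of the same length `2 ^ k`, where the
exponent `k = (m + 1) * g` of the `m`-th gap is large compared with its starting point `g`, and
let `S` be the union of the blocks. Enumerate `S` block after block, each block in bit-reversal
order, which contains no 3-term progression. A progression `a, b, c` (in enumeration order) cannot
meet two blocks: if `c` lies in a later block than `b`, then `c > 2 b` because the gap before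
`c`'s block is longer than everything before it; if `a` lies in an earlier block than `b` and `c`,
then `2 b - c` exceeds the start of the gap before their block. Since `2 ^ k > (m + 1) g`, the
`m`-th block fills almost half of `[1, g']`, where `g'` is its end, so `S` has upper density at
least `1/2`.
-/

open Filter

/-- A set `S` of naturals is 3-free if some enumeration of `S` contains no
3-term arithmetic progression (with nonzero, possibly negative, common
difference) as a subsequence. -/
def ThreeFree (S : Set ℕ) : Prop :=
  ∃ f : ℕ → ℕ, IsPermOf f S ∧
    ¬ ∃ i j k : ℕ, i < j ∧ j < k ∧
      ((f j : ℤ) - (f i : ℤ) = (f k : ℤ) - (f j : ℤ)) ∧ f i ≠ f j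

/-- The upper density `limsup |S ∩ [1, n]| / n` of a set of naturals. -/
noncomputable def upperDensity (S : Set ℕ) : ℝ :=
  limsup (fun n : ℕ => (Nat.card ↥(S ∩ Set.Icc 1 n) : ℝ) / n) atTop

open Set
open Finset (range sum_range_succ range_subset_range)

def bitRevPerm : ℕ → ℕ → ℕ
  | 0, _ => 0
  | n + 1, t => if t < 2 ^ n then 2 * bitRevPerm n t else 2 * bitRevPerm n (t - 2 ^ n) + 1

namespace bitRevPerm

lemma lt_two_pow {n t : ℕ} (ht : t < 2 ^ n) : bitRevPerm n t < 2 ^ n := by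
  induction n generalizing t with
  | zero => simp_all [bitRevPerm]
  | succ n ih =>
    rw [pow_succ] at ht ⊢
    unfold bitRevPerm
    split_ifs with h
    · have := ih h; omega
    · have := ih (t := t - 2 ^ n) (by omega); omega

lemma injOn (n : ℕ) : InjOn (bitRevPerm n) (Iio (2 ^ n)) := by
  induction n with
  | zero => intro i hi j hj _; simp_all
  | succ n ih =>
    intro i hi j hj hij
    simp only [mem_Iio, pow_succ] at hi hj
    unfold bitRevPerm at hij
    split_ifs at hij with h₁ h₂ h₂
    · exact ih h₁ h₂ (by omega)
    · omega
    · omega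
    · have := @ih (i - 2 ^ n) (mem_Iio.2 (by omega)) (j - 2 ^ n) (mem_Iio.2 (by omega)) (by omega)
      omega

lemma bijOn (n : ℕ) : BijOn (bitRevPerm n) (Iio (2 ^ n)) (Iio (2 ^ n)) :=
  ((finite_Iio _).injOn_iff_bijOn_of_mapsTo fun _ ↦ lt_two_pow).1 (injOn n)

/-- `a + c = 2 b` forces `a ≡ c (mod 2)`, so the positions of `a` and `c`, and hence that of `b`,
lie in the same half, where the values are `2 x` (or `2 x + 1`) with `x` enumerated recursively. -/
lemma add_ne_two_mul {n i j k : ℕ} (hij : i < j) (hjk : j < k) (hk : k < 2 ^ n) :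
    bitRevPerm n i + bitRevPerm n k ≠ 2 * bitRevPerm n j := by
  induction n generalizing i j k with
  | zero => omega
  | succ n ih =>
    rw [pow_succ] at hk
    unfold bitRevPerm
    split_ifs <;> try omega
    · exact fun h ↦ ih hij hjk (by omega) (by omega)
    · exact fun h ↦ ih (i := i - 2 ^ n) (j := j - 2 ^ n) (k := k - 2 ^ n) (by omega) (by omega)
        (by omega) (by omega)

end bitRevPerm

section BlockConcat

variable (L : ℕ → ℕ) (e : ℕ → ℕ → ℕ)

/-- For positive block lengths `L`, the `q` with `∑ j < q, L j ≤ i < ∑ j ≤ q, L j`. -/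
def blockIndex (i : ℕ) : ℕ :=
  Nat.findGreatest (fun q ↦ ∑ j ∈ range q, L j ≤ i) i

def concatEnum (i : ℕ) : ℕ :=
  e (blockIndex L i) (i - ∑ j ∈ range (blockIndex L i), L j)

variable {L e}

lemma le_of_sum_range_le_sum_range_add {p q t : ℕ} (ht : t < L q)
    (h : ∑ j ∈ range p, L j ≤ ∑ j ∈ range q, L j + t) : p ≤ q := by
  by_contra! hqp
  have := Finset.sum_le_sum_of_subset (f := L) (range_subset_range.2 hqp)
  rw [sum_range_succ] at this
  omega

lemma le_sum_range_of_pos (hL : ∀ j, 0 < L j) (q : ℕ) : q ≤ ∑ j ∈ range q, L j := by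
  simpa using Finset.card_nsmul_le_sum (range q) L 1 fun j _ ↦ hL j

lemma blockIndex_sum_range_add (hL : ∀ j, 0 < L j) {q t : ℕ} (ht : t < L q) :
    blockIndex L (∑ j ∈ range q, L j + t) = q := by
  have := le_sum_range_of_pos hL q
  refine Nat.findGreatest_eq_iff.2 ⟨by omega, fun _ ↦ by omega, fun k hqk _ hk ↦ ?_⟩
  exact absurd (le_of_sum_range_le_sum_range_add ht hk) (by omega)

lemma concatEnum_sum_range_add (hL : ∀ j, 0 < L j) {q t : ℕ} (ht : t < L q) :
    concatEnum L e (∑ j ∈ range q, L j + t) = e q t := by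
  simp [concatEnum, blockIndex_sum_range_add hL ht]

lemma exists_eq_sum_range_add (hL : ∀ j, 0 < L j) (i : ℕ) :
    ∃ q, ∃ t < L q, i = ∑ j ∈ range q, L j + t := by
  let P q := ∑ j ∈ range q, L j ≤ i
  have hle : P (blockIndex L i) := Nat.findGreatest_spec (Nat.zero_le i) (by simp)
  have hlt : ¬ P (blockIndex L i + 1) := by
    by_cases hqi : blockIndex L i + 1 ≤ i
    · exact Nat.findGreatest_is_greatest (Nat.lt_add_one _) hqi
    · have := le_sum_range_of_pos hL (blockIndex L i + 1)
      simp only [P]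
      omega
  simp only [P, sum_range_succ] at hle hlt
  exact ⟨blockIndex L i, i - ∑ j ∈ range (blockIndex L i), L j, by omega, by omega⟩

variable {a b : ℕ → ℕ} (hL : ∀ j, 0 < L j)
  (hmaps : ∀ q, MapsTo (e q) (Iio (L q)) (Ico (a q) (b q)))
include hL hmaps

theorem concatEnum_injective (hinj : ∀ q, InjOn (e q) (Iio (L q)))
    (hab : ∀ q r, q < r → b q ≤ a r) : Function.Injective (concatEnum L e) := by
  intro i i' h
  obtain ⟨q, t, ht, rfl⟩ := exists_eq_sum_range_add hL i
  obtain ⟨q', t', ht', rfl⟩ := exists_eq_sum_range_add hL i'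
  rw [concatEnum_sum_range_add hL ht, concatEnum_sum_range_add hL ht'] at h
  have hle : ∀ {q q' t t'}, t < L q → t' < L q' → e q t = e q' t' → q ≤ q' := by
    intro q q' t t' ht ht' h
    by_contra! hlt
    have := hab _ _ hlt
    have hq := hmaps q ht
    have hq' := hmaps q' ht'
    simp only [mem_Ico] at hq hq'
    omega
  obtain rfl := le_antisymm (hle ht ht' h) (hle ht' ht h.symm)
  rw [hinj q ht ht' h]

theorem range_concatEnum (hsurj : ∀ q, SurjOn (e q) (Iio (L q)) (Ico (a q) (b q))) :
    Set.range (concatEnum L e) = ⋃ q, Ico (a q) (b q) := by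
  ext y
  simp only [mem_range, mem_iUnion]
  constructor
  · rintro ⟨i, rfl⟩
    obtain ⟨q, t, ht, rfl⟩ := exists_eq_sum_range_add hL i
    exact ⟨q, concatEnum_sum_range_add hL ht ▸ hmaps q ht⟩
  · rintro ⟨q, hy⟩
    obtain ⟨t, ht, rfl⟩ := hsurj q hy
    exact ⟨_, concatEnum_sum_range_add hL ht⟩

theorem concatEnum_add_ne_two_mul (hfar : ∀ q r, q < r → 2 * b q ≤ a r)
    (hnear : ∀ p q, p < q → b p + b q ≤ 2 * a q)
    (hblock : ∀ q i j k, i < j → j < k → k < L q → e q i + e q k ≠ 2 * e q j)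
    {i j k : ℕ} (hij : i < j) (hjk : j < k) :
    concatEnum L e i + concatEnum L e k ≠ 2 * concatEnum L e j := by
  obtain ⟨p, ti, hti, rfl⟩ := exists_eq_sum_range_add hL i
  obtain ⟨q, tj, htj, rfl⟩ := exists_eq_sum_range_add hL j
  obtain ⟨r, tk, htk, rfl⟩ := exists_eq_sum_range_add hL k
  have hpq : p ≤ q := le_of_sum_range_le_sum_range_add htj (by omega)
  have hqr : q ≤ r := le_of_sum_range_le_sum_range_add htk (by omega)
  rw [concatEnum_sum_range_add hL hti, concatEnum_sum_range_add hL htj,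
    concatEnum_sum_range_add hL htk]
  have hi := hmaps p hti
  have hj := hmaps q htj
  have hk := hmaps r htk
  simp only [mem_Ico] at hi hj hk
  rcases hqr.lt_or_eq with hqr | rfl
  · have := hfar q r hqr
    omega
  rcases hpq.lt_or_eq with hpq | rfl
  · have := hnear p q hpq
    omega
  exact hblock p ti tj tk (by omega) (by omega) htk

end BlockConcat

lemma threeFree_range {f : ℕ → ℕ} (hf : Function.Injective f)
    (hAP : ∀ i j k, i < j → j < k → f i + f k ≠ 2 * f j) : ThreeFree (Set.range f) :=
  ⟨f, ⟨hf, rfl⟩, fun ⟨i, j, k, hij, hjk, h, _⟩ ↦ hAP i j k hij hjk (by omega)⟩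

lemma card_inter_Icc_div_le_one (S : Set ℕ) (n : ℕ) :
    (Nat.card ↥(S ∩ Icc 1 n) : ℝ) / n ≤ 1 := by
  refine div_le_one_of_le₀ ?_ n.cast_nonneg
  have := Nat.card_mono (finite_Icc 1 n) (inter_subset_right (s := S))
  exact_mod_cast (by simpa using this)

lemma isBoundedUnder_card_inter_Icc_div (S : Set ℕ) :
    atTop.IsBoundedUnder (· ≤ ·) fun n : ℕ ↦ (Nat.card ↥(S ∩ Icc 1 n) : ℝ) / n :=
  isBoundedUnder_of ⟨1, card_inter_Icc_div_le_one S⟩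

lemma upperDensity_le_one (S : Set ℕ) : upperDensity S ≤ 1 :=
  limsup_le_of_le (isCoboundedUnder_le_of_le atTop fun _ ↦ by positivity)
    (Eventually.of_forall (card_inter_Icc_div_le_one S))

lemma le_upperDensity_of_tendsto {S : Set ℕ} {n : ℕ → ℕ} {ℓ : ℕ → ℝ} {c : ℝ}
    (hn : Tendsto n atTop atTop) (hℓ : Tendsto ℓ atTop (nhds c))
    (h : ∀ m, ℓ m ≤ (Nat.card ↥(S ∩ Icc 1 (n m)) : ℝ) / (n m)) :
    c ≤ upperDensity S := by
  refine le_of_forall_lt_imp_le_of_dense fun w hw ↦ ?_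
  refine le_limsup_of_frequently_le ?_ (isBoundedUnder_card_inter_Icc_div S)
  refine hn.frequently ((hℓ.eventually (lt_mem_nhds hw)).frequently.mono fun m hm ↦ ?_)
  exact hm.le.trans (h m)

namespace DenseThreeFree

/-- Block `m` is `[blockStart m, gapStart (m + 1))`, preceded by the gap
`[gapStart m, blockStart m)`; both have length `2 ^ blockExp m`. -/
def gapStart : ℕ → ℕ
  | 0 => 0
  | m + 1 => gapStart m + 2 * 2 ^ ((m + 1) * gapStart m)

def blockExp (m : ℕ) : ℕ := (m + 1) * gapStart m

def blockStart (m : ℕ) : ℕ := gapStart m + 2 ^ blockExp m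

lemma gapStart_succ (m : ℕ) : gapStart (m + 1) = blockStart m + 2 ^ blockExp m := by
  rw [gapStart, blockStart, blockExp]
  ring

lemma mul_gapStart_lt (m : ℕ) : (m + 1) * gapStart m < 2 ^ blockExp m :=
  Nat.lt_two_pow_self

lemma gapStart_lt (m : ℕ) : gapStart m < 2 ^ blockExp m :=
  (Nat.le_mul_of_pos_left _ m.succ_pos).trans_lt (mul_gapStart_lt m)

lemma gapStart_strictMono : StrictMono gapStart :=
  strictMono_nat_of_lt_succ fun m ↦ by
    rw [gapStart_succ, blockStart]
    have := Nat.one_le_two_pow (n := blockExp m)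
    omega

def block (m : ℕ) : Set ℕ := Ico (blockStart m) (gapStart (m + 1))

def denseSet : Set ℕ := ⋃ m, block m

def enum : ℕ → ℕ :=
  concatEnum (fun m ↦ 2 ^ blockExp m) fun m t ↦ blockStart m + bitRevPerm (blockExp m) t

lemma mapsTo_block (m : ℕ) :
    MapsTo (fun t ↦ blockStart m + bitRevPerm (blockExp m) t) (Iio (2 ^ blockExp m)) (block m) :=
  fun t ht ↦ by
    have := bitRevPerm.lt_two_pow ht
    simp only [block, mem_Ico, gapStart_succ]
    omega

lemma surjOn_block (m : ℕ) :
    SurjOn (fun t ↦ blockStart m + bitRevPerm (blockExp m) t) (Iio (2 ^ blockExp m)) (block m) :=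
  fun y hy ↦ by
    simp only [block, mem_Ico, gapStart_succ] at hy
    obtain ⟨t, ht, hty⟩ := (bitRevPerm.bijOn (blockExp m)).surjOn
      (show y - blockStart m ∈ Iio (2 ^ blockExp m) by simp only [mem_Iio]; omega)
    exact ⟨t, ht, by simp only [hty]; omega⟩

lemma two_mul_gapStart_succ_le {q r : ℕ} (hqr : q < r) :
    2 * gapStart (q + 1) ≤ blockStart r := by
  have : gapStart (q + 1) ≤ gapStart r := gapStart_strictMono.monotone hqr
  have := gapStart_lt r
  rw [blockStart]
  omega

lemma gapStart_succ_add_gapStart_succ_le {p q : ℕ} (hpq : p < q) :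
    gapStart (p + 1) + gapStart (q + 1) ≤ 2 * blockStart q := by
  have : gapStart (p + 1) ≤ gapStart q := gapStart_strictMono.monotone hpq
  rw [gapStart_succ q, blockStart]
  omega

lemma range_enum : Set.range enum = denseSet :=
  range_concatEnum (fun _ ↦ Nat.two_pow_pos _) mapsTo_block surjOn_block

lemma threeFree_denseSet : ThreeFree denseSet := by
  have hL (m : ℕ) : 0 < 2 ^ blockExp m := Nat.two_pow_pos _
  have hinj : Function.Injective enum :=
    concatEnum_injective hL mapsTo_block
      (fun m ↦ (add_right_injective _).comp_injOn (bitRevPerm.injOn _))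
      fun q r hqr ↦ (gapStart_strictMono.monotone hqr).trans (Nat.le_add_right _ _)
  have hAP : ∀ i j k, i < j → j < k → enum i + enum k ≠ 2 * enum j := fun i j k hij hjk ↦
    concatEnum_add_ne_two_mul hL mapsTo_block
      (fun _ _ ↦ two_mul_gapStart_succ_le) (fun _ _ ↦ gapStart_succ_add_gapStart_succ_le)
      (fun _ _ _ _ hij hjk hk h ↦ bitRevPerm.add_ne_two_mul hij hjk hk (by omega)) hij hjk
  exact range_enum ▸ threeFree_range hinj hAP

lemma zero_notMem_denseSet : 0 ∉ denseSet := by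
  intro h
  obtain ⟨m, hm⟩ := mem_iUnion.1 h
  have := Nat.two_pow_pos (blockExp m)
  simp only [block, blockStart, mem_Ico] at hm
  omega

lemma two_pow_blockExp_le_card (m : ℕ) :
    2 ^ blockExp m ≤ Nat.card ↥(denseSet ∩ Icc 1 (gapStart (m + 1))) := by
  have hsub : block m ⊆ denseSet ∩ Icc 1 (gapStart (m + 1)) := fun y hy ↦ by
    refine ⟨mem_iUnion.2 ⟨m, hy⟩, ?_⟩
    have := Nat.two_pow_pos (blockExp m)
    simp only [block, blockStart, mem_Ico] at hy
    simp only [mem_Icc]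
    omega
  have hcard : Nat.card ↥(block m) = 2 ^ blockExp m := by
    simp [block, gapStart_succ]
  exact hcard ▸ Nat.card_mono ((finite_Icc _ _).inter_of_right _) hsub

lemma inv_two_add_le_card_div (m : ℕ) :
    (2 + 1 / ((m : ℝ) + 1))⁻¹ ≤
      (Nat.card ↥(denseSet ∩ Icc 1 (gapStart (m + 1))) : ℝ) / (gapStart (m + 1) : ℕ) := by
  have hgap : (gapStart (m + 1) : ℝ) = gapStart m + 2 * 2 ^ blockExp m := by
    rw [gapStart_succ, blockStart]; push_cast; ring
  have hsmall : ((m : ℝ) + 1) * gapStart m ≤ 2 ^ blockExp m := by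
    exact_mod_cast (mul_gapStart_lt m).le
  have hcard : (2 : ℝ) ^ blockExp m ≤ Nat.card ↥(denseSet ∩ Icc 1 (gapStart (m + 1))) := by
    exact_mod_cast two_pow_blockExp_le_card m
  rw [hgap]
  calc (2 + 1 / ((m : ℝ) + 1))⁻¹ ≤ 2 ^ blockExp m / (gapStart m + 2 * 2 ^ blockExp m) := by
        have : (gapStart m : ℝ) ≤ 2 ^ blockExp m / ((m : ℝ) + 1) := by
          rw [le_div_iff₀ (by positivity)]
          linarith
        rw [le_div_iff₀ (by positivity), inv_mul_le_iff₀ (by positivity), add_mul,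
          one_div_mul_eq_div]
        linarith
    _ ≤ _ := by gcongr

theorem half_le_upperDensity_denseSet : 1 / 2 ≤ upperDensity denseSet := by
  refine le_upperDensity_of_tendsto
    ((tendsto_add_atTop_iff_nat 1).2 gapStart_strictMono.tendsto_atTop) ?_ inv_two_add_le_card_div
  simpa using (tendsto_one_div_add_atTop_nhds_zero_nat.const_add (2 : ℝ)).inv₀ (by norm_num)

end DenseThreeFree

/-- There is a 3-free set of positive integers with upper density at least
`1/2`; hence `α(3) ≥ 1/2`. -/
theorem alpha_three_ge_half :
    (∃ S : Set ℕ, 0 ∉ S ∧ ThreeFree S ∧ 1 / 2 ≤ upperDensity S) ∧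
    1 / 2 ≤ sSup {x : ℝ | ∃ S : Set ℕ, 0 ∉ S ∧ ThreeFree S ∧ upperDensity S = x} := by
  obtain ⟨S, hS⟩ : ∃ S : Set ℕ, 0 ∉ S ∧ ThreeFree S ∧ 1 / 2 ≤ upperDensity S :=
    ⟨_, DenseThreeFree.zero_notMem_denseSet, DenseThreeFree.threeFree_denseSet,
      DenseThreeFree.half_le_upperDensity_denseSet⟩
  refine ⟨⟨S, hS⟩, hS.2.2.trans (le_csSup ⟨1, ?_⟩ ⟨S, hS.1, hS.2.1, rfl⟩)⟩
  rintro _ ⟨T, -, -, rfl⟩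
  exact upperDensity_le_one T
end

section
/- There exists a 3-free set of positive integers whose lower density is at least 1/4. Hence β(3) = sup{lower density of S : S is 3-free} ≥ 1/4. -/
open Filter

/-- The lower density `liminf |S ∩ [1, n]| / n` of a set of naturals. -/
noncomputable def lowerDensity (S : Set ℕ) : ℝ :=
  liminf (fun n : ℕ => (Nat.card ↥(S ∩ Set.Icc 1 n) : ℝ) / n) atTop

namespace BetaThree


/-- AP-free permutation of `[0,n)`: evens (recursively) first, then odds. -/
def pperm : ℕ → List ℕ
  | 0 => []
  | 1 => [0]
  | n+2 =>
    ((pperm ((n+2+1)/2)).map (fun x => 2*x)) ++ ((pperm ((n+2)/2)).map (fun x => 2*x+1))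
termination_by n => n
decreasing_by all_goals omega

lemma pperm_length (n : ℕ) : (pperm n).length = n := by
  induction n using pperm.induct with
  | case1 => simp [pperm]
  | case2 => simp [pperm]
  | case3 n ih1 ih2 =>
    rw [pperm]
    simp only [List.length_append, List.length_map, ih1, ih2]
    omega

lemma pperm_mem {n x : ℕ} : x ∈ pperm n ↔ x < n := by
  induction n using pperm.induct generalizing x with
  | case1 => simp [pperm]
  | case2 => simp [pperm]
  | case3 n ih1 ih2 =>
    simp only [pperm, List.mem_append, List.mem_map]
    constructor
    · rintro (⟨y, hy, rfl⟩ | ⟨y, hy, rfl⟩) <;> [replace hy := ih1.1 hy; replace hy := ih2.1 hy] <;> omega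
    · intro hx
      rcases Nat.even_or_odd x with ⟨y, rfl⟩ | ⟨y, rfl⟩
      · exact Or.inl ⟨y, ih1.2 (by omega), by omega⟩
      · exact Or.inr ⟨y, ih2.2 (by omega), by omega⟩

lemma pperm_nodup (n : ℕ) : (pperm n).Nodup := by
  induction n using pperm.induct with
  | case1 => simp [pperm]
  | case2 => simp [pperm]
  | case3 n ih1 ih2 =>
    rw [pperm]
    refine List.Nodup.append (ih1.map ?_) (ih2.map ?_) ?_
    · intro a b h; simp only at h; omega
    · intro a b h; simp only at h; omega
    · intro x hx hy
      simp only [List.mem_map] at hx hy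
      obtain ⟨a, _, rfl⟩ := hx; obtain ⟨b, _, hb⟩ := hy; omega



lemma pperm_getD_lt {n j : ℕ} (h : j < n) : (pperm n).getD j 0 < n := by
  have hl : j < (pperm n).length := by rw [pperm_length]; exact h
  rw [List.getD_eq_getElem _ _ hl]
  exact pperm_mem.1 (List.getElem_mem _)

lemma pperm_getD_even {n x : ℕ} (hx : x < (n+2+1)/2) :
    (pperm (n+2)).getD x 0 = 2 * (pperm ((n+2+1)/2)).getD x 0 := by
  have h1 : x < ((pperm ((n+2+1)/2)).map (fun y => 2*y)).length := by
    simp only [List.length_map, pperm_length]; omega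
  rw [pperm, List.getD_append _ _ _ _ h1]
  have h2 : x < (pperm ((n+2+1)/2)).length := by rw [pperm_length]; exact hx
  rw [List.getD_eq_getElem _ _ h1, List.getElem_map, List.getD_eq_getElem _ _ h2]

lemma pperm_getD_odd {n x : ℕ} (hx1 : (n+2+1)/2 ≤ x) (hx2 : x < n+2) :
    (pperm (n+2)).getD x 0 = 2 * (pperm ((n+2)/2)).getD (x - (n+2+1)/2) 0 + 1 := by
  have hlen : ((pperm ((n+2+1)/2)).map (fun y => 2*y)).length = (n+2+1)/2 := by
    simp only [List.length_map, pperm_length]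
  rw [pperm, List.getD_append_right _ _ _ _ (by rw [hlen]; exact hx1), hlen]
  have h2 : x - (n+2+1)/2 < (pperm ((n+2)/2)).length := by rw [pperm_length]; omega
  have h1 : x - (n+2+1)/2 < ((pperm ((n+2)/2)).map (fun y => 2*y+1)).length := by
    simpa using h2
  rw [List.getD_eq_getElem _ _ h1, List.getElem_map, List.getD_eq_getElem _ _ h2]

lemma pperm_noAP {n : ℕ} : ∀ i j k, i < j → j < k → k < n →
    (pperm n).getD i 0 + (pperm n).getD k 0 ≠ 2 * (pperm n).getD j 0 := by
  induction n using pperm.induct with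
  | case1 => intro i j k _ _ h; omega
  | case2 => intro i j k _ _ h; omega
  | case3 n ih1 ih2 =>
    intro i j k hij hjk hk
    by_cases hka : k < (n+2+1)/2
    · rw [pperm_getD_even (show i < (n+2+1)/2 by omega),
        pperm_getD_even (show j < (n+2+1)/2 by omega), pperm_getD_even hka]
      intro h
      exact ih1 i j k hij hjk hka (by omega)
    · by_cases hia : i < (n+2+1)/2
      · by_cases hja : j < (n+2+1)/2
        · rw [pperm_getD_even hia, pperm_getD_even hja, pperm_getD_odd (by omega) hk]
          omega
        · rw [pperm_getD_even hia, pperm_getD_odd (x := j) (by omega) (by omega), pperm_getD_odd (x := k) (by omega) hk]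
          omega
      · rw [pperm_getD_odd (x := i) (by omega) (by omega), pperm_getD_odd (x := j) (by omega) (by omega),
          pperm_getD_odd (x := k) (by omega) hk]
        intro h
        exact ih2 (i-(n+2+1)/2) (j-(n+2+1)/2) (k-(n+2+1)/2) (by omega) (by omega) (by omega) (by omega)
/-- The 3-free set: union of blocks `[2*3^t, 3^(t+1))`. -/
def S3 : Set ℕ := {x | ∃ t, 2 * 3^t ≤ x ∧ x < 3^(t+1)}

/-- Enumeration of block `t`. -/
noncomputable def bl (t : ℕ) : List ℕ := (pperm (3^t)).map (fun x => x + 2*3^t)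

noncomputable def itf (t n : ℕ) : ℕ :=
  if h : n < 3^t then (bl t).getD n 0 else itf (t+1) (n - 3^t)
termination_by n
decreasing_by
  have : 0 < 3^t := pow_pos (by norm_num) t
  omega

/-- The enumeration of `S3`. -/
noncomputable def ef : ℕ → ℕ := itf 0

/-- Offsets: `off t = 3^0 + ... + 3^(t-1)`. -/
def off : ℕ → ℕ
  | 0 => 0
  | t+1 => off t + 3^t

@[simp] lemma off_zero : off 0 = 0 := rfl
@[simp] lemma off_succ (t : ℕ) : off (t+1) = off t + 3^t := rfl

lemma two_off (t : ℕ) : 2 * off t + 1 = 3^t := by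
  induction t with
  | zero => simp [off]
  | succ t ih => rw [off_succ]; ring_nf; ring_nf at ih; omega

lemma off_mono : Monotone off := by
  apply monotone_nat_of_le_succ
  intro t; rw [off_succ]; exact Nat.le_add_right _ _

lemma itf_lt {t n : ℕ} (h : n < 3^t) : itf t n = (bl t).getD n 0 := by
  rw [itf, dif_pos h]

lemma itf_ge {t n : ℕ} (h : 3^t ≤ n) : itf t n = itf (t+1) (n - 3^t) := by
  rw [itf, dif_neg (Nat.not_lt.2 h)]

lemma ef_eval : ∀ t j, ef (off t + j) = itf t j := by
  intro t
  induction t with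
  | zero => intro j; simp [ef, off]
  | succ t ih =>
    intro j
    have h1 : off (t+1) + j = off t + (3^t + j) := by rw [off_succ]; ring
    rw [h1, ih (3^t + j), itf_ge (by omega)]
    congr 1
    omega

lemma bl_getD {t j : ℕ} (hj : j < 3^t) :
    (bl t).getD j 0 = (pperm (3^t)).getD j 0 + 2*3^t := by
  have h2 : j < (pperm (3^t)).length := by rw [pperm_length]; exact hj
  have h1 : j < ((pperm (3^t)).map (fun x => x + 2*3^t)).length := by simpa using h2
  calc (bl t).getD j 0 = ((pperm (3^t)).map (fun x => x + 2*3^t)).getD j 0 := rfl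
    _ = _ := by rw [List.getD_eq_getElem _ _ h1, List.getElem_map, List.getD_eq_getElem _ _ h2]

lemma ef_block {t j : ℕ} (hj : j < 3^t) :
    ef (off t + j) = (pperm (3^t)).getD j 0 + 2*3^t := by
  rw [ef_eval, itf_lt hj, bl_getD hj]

lemma exists_decomp (n : ℕ) : ∃ t j, j < 3^t ∧ n = off t + j := by
  induction n with
  | zero => exact ⟨0, 0, by norm_num, by simp [off]⟩
  | succ n ih =>
    obtain ⟨t, j, hj, rfl⟩ := ih
    rcases Nat.lt_or_ge (j+1) (3^t) with h | h
    · exact ⟨t, j+1, h, by omega⟩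
    · exact ⟨t+1, 0, pow_pos (by norm_num) _, by rw [off_succ]; omega⟩

lemma decomp_lt {t j t' j' : ℕ} (hj : j < 3^t) (hj' : j' < 3^t')
    (h : off t + j < off t' + j') : t < t' ∨ (t = t' ∧ j < j') := by
  rcases lt_trichotomy t t' with ht | rfl | ht
  · exact Or.inl ht
  · exact Or.inr ⟨rfl, by omega⟩
  · exfalso
    have h1 : off t' + j' < off (t'+1) := by rw [off_succ]; omega
    have h2 : off (t'+1) ≤ off t := off_mono ht
    omega

lemma pow3_le {a b : ℕ} (h : a ≤ b) : (3:ℕ)^a ≤ 3^b :=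
  Nat.pow_le_pow_right (by norm_num) h

/-- value bounds -/
lemma ef_mem_block {t j : ℕ} (hj : j < 3^t) :
    2*3^t ≤ ef (off t + j) ∧ ef (off t + j) < 3^(t+1) := by
  rw [ef_block hj]
  have := pperm_getD_lt hj
  constructor
  · omega
  · have : 3^(t+1) = 3 * 3^t := by ring
    omega



lemma pperm_getD_inj {n i j : ℕ} (hi : i < n) (hj : j < n)
    (h : (pperm n).getD i 0 = (pperm n).getD j 0) : i = j := by
  have hi' : i < (pperm n).length := by rw [pperm_length]; exact hi
  have hj' : j < (pperm n).length := by rw [pperm_length]; exact hj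
  rw [List.getD_eq_getElem _ _ hi', List.getD_eq_getElem _ _ hj'] at h
  exact (List.Nodup.getElem_inj_iff (pperm_nodup n)).mp h

lemma ef_inj : Function.Injective ef := by
  intro m n h
  obtain ⟨t, j, hj, rfl⟩ := exists_decomp m
  obtain ⟨t', j', hj', rfl⟩ := exists_decomp n
  have key : ∀ a b a' b' : ℕ, a < b → ¬ (3^(a+1) ≤ 3^b) → True := fun _ _ _ _ _ _ => trivial
  have htt : t = t' := by
    by_contra hne
    rcases Nat.lt_or_ge t t' with hlt | hge
    · have h1 := (ef_mem_block hj).2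
      have h2 := (ef_mem_block hj').1
      have h3 : (3:ℕ)^(t+1) ≤ 3^t' := pow3_le hlt
      omega
    · have hlt : t' < t := by omega
      have h1 := (ef_mem_block hj').2
      have h2 := (ef_mem_block hj).1
      have h3 : (3:ℕ)^(t'+1) ≤ 3^t := pow3_le hlt
      omega
  subst htt
  rw [ef_block hj, ef_block hj'] at h
  have : j = j' := pperm_getD_inj hj hj' (by omega)
  omega

lemma ef_range : Set.range ef = S3 := by
  ext x
  constructor
  · rintro ⟨n, rfl⟩
    obtain ⟨t, j, hj, rfl⟩ := exists_decomp n
    exact ⟨t, (ef_mem_block hj).1, (ef_mem_block hj).2⟩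
  · rintro ⟨t, h1, h2⟩
    have hw : x - 2*3^t ∈ pperm (3^t) := by
      rw [pperm_mem]
      have : (3:ℕ)^(t+1) = 3*3^t := by ring
      omega
    obtain ⟨j, hjlen, hx⟩ := List.mem_iff_getElem.mp hw
    have hj : j < 3^t := by rwa [pperm_length] at hjlen
    refine ⟨off t + j, ?_⟩
    rw [ef_block hj, List.getD_eq_getElem _ _ hjlen, hx]
    omega

theorem ef_noAP : ¬ ∃ i j k : ℕ, i < j ∧ j < k ∧
    ((ef j : ℤ) - (ef i : ℤ) = (ef k : ℤ) - (ef j : ℤ)) ∧ ef i ≠ ef j := by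
  rintro ⟨i, j, k, hij, hjk, heq, -⟩
  obtain ⟨t1, j1, hj1, rfl⟩ := exists_decomp i
  obtain ⟨t2, j2, hj2, rfl⟩ := exists_decomp j
  obtain ⟨t3, j3, hj3, rfl⟩ := exists_decomp k
  have hsum : ef (off t1 + j1) + ef (off t3 + j3) = 2 * ef (off t2 + j2) := by omega
  rcases decomp_lt hj2 hj3 hjk with h23 | ⟨rfl, hj23⟩
  · -- t2 < t3 : size contradiction
    have h1 := (ef_mem_block hj1).1
    have h2 := (ef_mem_block hj2).2
    have h3 := (ef_mem_block hj3).1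
    have hp : (3:ℕ)^(t2+1) ≤ 3^t3 := pow3_le h23
    have hp1 : (1:ℕ) ≤ 3^t1 := Nat.one_le_pow _ _ (by norm_num)
    omega
  · rcases decomp_lt hj1 hj2 hij with h12 | ⟨rfl, hj12⟩
    · -- t1 < t2 = t3 : size contradiction
      have h1 := (ef_mem_block hj1).2
      have h2 := (ef_mem_block hj2).1
      have h3 := (ef_mem_block hj3).2
      have hp : (3:ℕ)^(t1+1) ≤ 3^t2 := pow3_le h12
      have hs : (3:ℕ)^(t2+1) = 3*3^t2 := by ring
      omega
    · -- same block
      rw [ef_block hj1, ef_block hj2, ef_block hj3] at hsum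
      exact pperm_noAP j1 j2 j3 hj12 hj23 hj3 (by omega)
lemma mem_S3_iff {n t : ℕ} (h1 : 3^t ≤ n) (h2 : n < 3^(t+1)) : n ∈ S3 ↔ 2*3^t ≤ n := by
  constructor
  · rintro ⟨t', a, b⟩
    have ht1 : t' < t + 1 := by
      by_contra hc
      have := pow3_le (show t+1 ≤ t' by omega)
      omega
    have ht2 : t < t' + 1 := by
      by_contra hc
      have := pow3_le (show t'+1 ≤ t by omega)
      omega
    have heq : t' = t := by omega
    subst heq
    omega
  · intro h
    exact ⟨t, h, h2⟩

instance S3dec : DecidablePred (· ∈ S3) := fun n =>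
  decidable_of_iff (1 ≤ n ∧ 2*3^(Nat.log 3 n) ≤ n) (by
    constructor
    · rintro ⟨hp, h2⟩
      exact (mem_S3_iff (Nat.pow_log_le_self 3 (by omega))
        (Nat.lt_pow_succ_log_self (by norm_num) n)).mpr h2
    · intro hn
      have hpos : 1 ≤ n := by
        obtain ⟨t, a, b⟩ := hn
        have : 0 < 3^t := pow_pos (by norm_num) t
        omega
      exact ⟨hpos, (mem_S3_iff (Nat.pow_log_le_self 3 (by omega))
        (Nat.lt_pow_succ_log_self (by norm_num) n)).mp hn⟩)

def F (n : ℕ) : Finset ℕ := (Finset.Icc 1 n).filter (· ∈ S3)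

lemma card_nat (n : ℕ) : Nat.card ↥(S3 ∩ Set.Icc 1 n) = (F n).card := by
  have h : S3 ∩ Set.Icc 1 n = ↑(F n) := by
    ext x
    simp only [F, Finset.coe_filter, Finset.mem_Icc, Set.mem_inter_iff, Set.mem_Icc,
      Set.mem_setOf_eq]
    tauto
  rw [h, Nat.card_coe_set_eq, Set.ncard_coe_finset]

lemma F_zero : (F 0).card = 0 := by simp [F]

lemma F_succ (n : ℕ) : (F (n+1)).card = (F n).card + (if n+1 ∈ S3 then 1 else 0) := by
  have hicc : Finset.Icc 1 (n+1) = insert (n+1) (Finset.Icc 1 n) := by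
    ext x; simp only [Finset.mem_Icc, Finset.mem_insert]; omega
  have hnotmem : n+1 ∉ Finset.filter (· ∈ S3) (Finset.Icc 1 n) := by
    simp only [Finset.mem_filter, Finset.mem_Icc]
    omega
  show (Finset.filter (· ∈ S3) (Finset.Icc 1 (n+1))).card = _
  rw [hicc, Finset.filter_insert]
  by_cases h : n+1 ∈ S3
  · rw [if_pos h, if_pos h, Finset.card_insert_of_notMem hnotmem]
    rfl
  · rw [if_neg h, if_neg h]
    rfl

lemma card_F : ∀ n t, 3^t ≤ n → n < 3^(t+1) → (F n).card = off t + (n + 1 - 2*3^t) := by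
  intro n
  induction n with
  | zero =>
    intro t h1 _
    have : 0 < 3^t := pow_pos (by norm_num) t
    omega
  | succ n ih =>
    intro t h1 h2
    rcases Nat.eq_zero_or_pos n with rfl | hn
    · have ht : t = 0 := by
        by_contra hc
        have := pow3_le (show 1 ≤ t by omega)
        omega
      subst ht
      rw [F_succ, F_zero]
      have hno : (1:ℕ) ∉ S3 := by
        rintro ⟨t', a, b⟩
        have : (1:ℕ) ≤ 3^t' := Nat.one_le_pow _ _ (by norm_num)
        omega
      rw [if_neg hno, off_zero]
      norm_num
    · rcases Nat.lt_or_ge n (3^t) with hb | ha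
      · obtain ⟨s, rfl⟩ : ∃ s, t = s + 1 := by
          rcases Nat.eq_zero_or_pos t with rfl | h
          · exfalso
            simp only [pow_zero] at h1 ⊢
            omega
          · exact ⟨t-1, by omega⟩
        have hs3 : (3:ℕ)^(s+1) = 3*3^s := by ring
        have hs4 : (3:ℕ)^(s+1+1) = 3*3^(s+1) := by ring
        have ihs := ih s (by omega) (by omega)
        rw [F_succ, ihs]
        have hnot : n+1 ∉ S3 := by
          rw [mem_S3_iff (by omega) h2]
          omega
        rw [if_neg hnot, off_succ]
        omega
      · have ihn := ih t ha (by omega)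
        rw [F_succ, ihn]
        rcases Nat.lt_or_ge (n+1) (2*3^t) with hc | hc
        · rw [if_neg (by rw [mem_S3_iff h1 h2]; omega)]
          omega
        · rw [if_pos (by rw [mem_S3_iff h1 h2]; omega)]
          omega

lemma card_lb (n : ℕ) : n ≤ 4 * (F n).card + 1 := by
  rcases Nat.eq_zero_or_pos n with rfl | hn
  · omega
  · have h1 : 3^(Nat.log 3 n) ≤ n := Nat.pow_log_le_self 3 (by omega)
    have h2 : n < 3^(Nat.log 3 n + 1) := Nat.lt_pow_succ_log_self (by norm_num) n
    rw [card_F n _ h1 h2]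
    have h3 := two_off (Nat.log 3 n)
    have h4 : (3:ℕ)^(Nat.log 3 n + 1) = 3*3^(Nat.log 3 n) := by ring
    omega

lemma a_le_one (S : Set ℕ) (n : ℕ) : (Nat.card ↥(S ∩ Set.Icc 1 n) : ℝ) / n ≤ 1 := by
  rcases Nat.eq_zero_or_pos n with rfl | hn
  · simp
  · have hc : Nat.card ↥(S ∩ Set.Icc 1 n) ≤ n := by
      have := Nat.card_mono (Set.finite_Icc 1 n) (Set.inter_subset_right (s := S))
      simpa [Nat.card_Icc] using this
    rw [div_le_one (by exact_mod_cast hn)]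
    exact_mod_cast hc

lemma a_nonneg (S : Set ℕ) (n : ℕ) : (0:ℝ) ≤ (Nat.card ↥(S ∩ Set.Icc 1 n) : ℝ) / n := by
  positivity

lemma lowerDensity_le_one (S : Set ℕ) : lowerDensity S ≤ 1 := by
  apply Filter.liminf_le_of_frequently_le
  · exact Filter.Eventually.frequently (Filter.Eventually.of_forall (a_le_one S))
  · exact Filter.isBoundedUnder_of ⟨0, a_nonneg S⟩

lemma quarter_le : 1/4 ≤ lowerDensity S3 := by
  set a : ℕ → ℝ := fun n : ℕ => (Nat.card ↥(S3 ∩ Set.Icc 1 n) : ℝ) / n with ha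
  set g : ℕ → ℝ := fun n : ℕ => 1/4 - 1/(4*(n:ℝ)) with hgdef
  have hg : Tendsto g atTop (nhds (1/4)) := by
    have h0 : Tendsto (fun n : ℕ => 1/(4*(n:ℝ))) atTop (nhds 0) := by
      have h4 : Tendsto (fun n : ℕ => (1:ℝ)/n) atTop (nhds 0) :=
        tendsto_one_div_atTop_nhds_zero_nat
      have h5 := h4.const_mul (1/4 : ℝ)
      simp only [mul_zero] at h5
      apply h5.congr
      intro n
      rcases Nat.eq_zero_or_pos n with rfl | hn
      · simp
      · have : (n:ℝ) ≠ 0 := by positivity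
        field_simp
    have h6 := (tendsto_const_nhds (x := (1/4 : ℝ)) (f := (atTop : Filter ℕ))).sub h0
    rw [sub_zero] at h6
    exact h6
  have hmain : ∀ᶠ n : ℕ in atTop, g n ≤ a n := by
    filter_upwards [eventually_ge_atTop 1] with n hn
    have hcard := card_lb n
    simp only [ha, hgdef]
    rw [card_nat]
    have hnR : (1:ℝ) ≤ (n:ℝ) := by exact_mod_cast hn
    have hn0 : (0:ℝ) < (n:ℝ) := by linarith
    have h4 : (n:ℝ) ≤ 4 * ((F n).card : ℝ) + 1 := by exact_mod_cast hcard
    rw [show (1:ℝ)/4 - 1/(4*(n:ℝ)) = ((n:ℝ)-1)/(4*n) by field_simp]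
    rw [div_le_div_iff₀ (by positivity) hn0]
    nlinarith [mul_nonneg (show (0:ℝ) ≤ 4*((F n).card:ℝ) - ((n:ℝ)-1) by linarith) hn0.le]
  have hb : IsBoundedUnder (· ≥ ·) atTop g := hg.isBoundedUnder_ge
  have hc : IsCoboundedUnder (· ≥ ·) atTop a :=
    IsBoundedUnder.isCoboundedUnder_ge (Filter.isBoundedUnder_of ⟨1, a_le_one S3⟩)
  calc (1:ℝ)/4 = liminf g atTop := hg.liminf_eq.symm
    _ ≤ liminf a atTop := liminf_le_liminf hmain hb hc
    _ = lowerDensity S3 := rfl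

end BetaThree

/-- There is a 3-free set of positive integers with lower density at least
`1/4`; hence `β(3) ≥ 1/4`. -/
theorem beta_three_ge_quarter :
    (∃ S : Set ℕ, 0 ∉ S ∧ ThreeFree S ∧ 1 / 4 ≤ lowerDensity S) ∧
    1 / 4 ≤ sSup {x : ℝ | ∃ S : Set ℕ, 0 ∉ S ∧ ThreeFree S ∧ lowerDensity S = x} := by
  have h0 : (0:ℕ) ∉ BetaThree.S3 := by
    rintro ⟨t, h, -⟩
    have : 0 < 3^t := pow_pos (by norm_num) t
    omega
  have hthree : ThreeFree BetaThree.S3 :=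
    ⟨BetaThree.ef, ⟨BetaThree.ef_inj, BetaThree.ef_range⟩, BetaThree.ef_noAP⟩
  have hq : 1/4 ≤ lowerDensity BetaThree.S3 := BetaThree.quarter_le
  refine ⟨⟨BetaThree.S3, h0, hthree, hq⟩, ?_⟩
  have hbdd : BddAbove {x : ℝ | ∃ S : Set ℕ, 0 ∉ S ∧ ThreeFree S ∧ lowerDensity S = x} := by
    refine ⟨1, ?_⟩
    rintro x ⟨S, -, -, rfl⟩
    exact BetaThree.lowerDensity_le_one S
  exact le_trans hq (le_csSup hbdd ⟨BetaThree.S3, h0, hthree, rfl⟩)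
end
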